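/- arXiv:1605.04730 — 6 statements merged into one kernel-verified Lean document; each statement's English description precedes it below -/
import Mathlib

section
/- For every finite simple graph G with m edges, there exists a set X of vertices with |X| ≤ m/5 such that G − X has no K₄ minor; that is, s(G) ≤ m/5. -/
open SimpleGraph

/-- `G` has a `K₄` minor (branch-set formulation: four nonempty, pairwise disjoint,
connected branch sets with an edge between every two of them). -/
def HasK4Minor {V : Type*} (G : SimpleGraph V) : Prop :=
  ∃ B : Fin 4 → Set V,
    (∀ i, (B i).Nonempty) ∧
    (∀ i, (G.induce (B i)).Connected) ∧
    (∀ i j, i ≠ j → Disjoint (B i) (B j)) ∧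
    (∀ i j, i ≠ j → ∃ u ∈ B i, ∃ v ∈ B j, G.Adj u v)

/-- `X` is a transversal of `G`: the graph `G − X` has no `K₄` minor. -/
def IsTransversal {V : Type*} (G : SimpleGraph V) (X : Finset V) : Prop :=
  ¬ HasK4Minor (G.induce ((↑X : Set V)ᶜ))

/-- `s(G)`: the minimum size of a transversal of `G`. -/
noncomputable def transNum {V : Type*} (G : SimpleGraph V) : ℕ :=
  sInf {n : ℕ | ∃ X : Finset V, X.card = n ∧ IsTransversal G X}

/-!
We find a transversal of size at most the potential `Φ(G) = ∑_v f(deg v)`, where `f(d) = 0` for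
`d ≤ 2` and `f(d) = 1 - 3/(d + 1)` for `d ≥ 3`, by induction on the degree sum. A vertex of degree
one or two is suppressed (its edges are replaced by an edge between its neighbours): this maps
every `K₄` minor of `G - X` to one of the new graph minus `X`, and raises no degree. Otherwise all
non-isolated vertices have degree at least `3`, and deleting a vertex of maximum degree `D` puts
it into the transversal while lowering `Φ` by at least `f(D) + D · 3/(D(D + 1)) = 1`. Finally
`f(d) ≤ d/10`, so `Φ(G) ≤ 2m/10`.
-/

section

variable {V W : Type*}

theorem Set.exists_eq_pair_of_ncard_le_two {s : Set V} (h₁ : 1 ≤ s.ncard) (h₂ : s.ncard ≤ 2) :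
    ∃ a b, s = {a, b} := by
  obtain h | h : s.ncard = 1 ∨ s.ncard = 2 := by omega
  · obtain ⟨a, rfl⟩ := Set.ncard_eq_one.1 h
    exact ⟨a, a, Set.pair_eq_singleton a |>.symm⟩
  · obtain ⟨a, b, -, rfl⟩ := Set.ncard_eq_two.1 h
    exact ⟨a, b, rfl⟩

theorem HasK4Minor.map {G : SimpleGraph V} {H : SimpleGraph W} (f : G →g H)
    (hf : Function.Injective f) (hG : HasK4Minor G) : HasK4Minor H := by
  obtain ⟨B, hne, hconn, hdisj, hadj⟩ := hG
  refine ⟨fun i => f '' B i, fun i => (hne i).image f, fun i => ?_,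
    fun i j hij => (Set.disjoint_image_iff hf).2 (hdisj i j hij), fun i j hij => ?_⟩
  · refine (hconn i).map (induceHom f (Set.mapsTo_image f (B i))) ?_
    rintro ⟨_, x, hx, rfl⟩
    exact ⟨⟨x, hx⟩, rfl⟩
  · obtain ⟨u, hu, w, hw, huw⟩ := hadj i j hij
    exact ⟨f u, Set.mem_image_of_mem f hu, f w, Set.mem_image_of_mem f hw, f.map_adj huw⟩

theorem isTransversal_of_forall_not_adj {G : SimpleGraph V} (hG : ∀ x y, ¬ G.Adj x y)
    (X : Finset V) : IsTransversal G X := by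
  rintro ⟨B, -, -, -, hadj⟩
  obtain ⟨u, -, w, -, huw⟩ := hadj 0 1 (by decide)
  exact hG u w huw

theorem transNum_le_card {G : SimpleGraph V} {X : Finset V} (hX : IsTransversal G X) :
    transNum G ≤ X.card :=
  Nat.sInf_le ⟨X, rfl, hX⟩

theorem induce_diff_singleton_connected {H H' : SimpleGraph W} {B : Set W} {v : W}
    (hB : (H.induce B).Connected) (hne : (B \ {v}).Nonempty)
    (hoff : ∀ x y, H.Adj x y → x ≠ v → y ≠ v → H'.Adj x y)
    (hnbr : ∀ x y, H.Adj v x → H.Adj v y → x ≠ y → H'.Adj x y) :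
    (H'.induce (B \ {v})).Connected := by
  set K := H'.induce (B \ {v})
  -- a walk that passes through `v` is shortcut by the edge between the two neighbours it uses
  have reroute : ∀ (x y : B) (_ : (H.induce B).Walk x y) (hy : (y : W) ≠ v),
      ∃ z : ↥(B \ {v}), ((z : W) = x ∨ (x : W) = v ∧ H.Adj v z) ∧
        K.Reachable z ⟨y, y.2, hy⟩ := by
    intro x y p hy
    induction p with
    | @nil u => exact ⟨⟨u, u.2, hy⟩, Or.inl rfl, .rfl⟩
    | @cons x z y hxz p ih =>
      obtain ⟨z', hz', hreach⟩ := ih hy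
      have hxz : H.Adj x z := hxz
      by_cases hx : (x : W) = v
      · have hzv : (z : W) ≠ v := hx ▸ hxz.ne'
        obtain rfl : z' = ⟨z, z.2, hzv⟩ := Subtype.ext (hz'.resolve_right fun h => hzv h.1)
        exact ⟨_, Or.inr ⟨hx, hx ▸ hxz⟩, hreach⟩
      refine ⟨⟨x, x.2, hx⟩, Or.inl rfl, ?_⟩
      by_cases hzv : (z : W) = v
      · obtain ⟨-, hvz'⟩ := hz'.resolve_left fun h => z'.2.2 (h.trans hzv)
        by_cases hxz' : (x : W) = z'
        · exact (Subtype.ext hxz' : (⟨x, x.2, hx⟩ : ↥(B \ {v})) = z') ▸ hreach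
        · have hK : K.Adj ⟨x, x.2, hx⟩ z' := hnbr x z' (hzv ▸ hxz.symm) hvz' hxz'
          exact hK.reachable.trans hreach
      · obtain rfl : z' = ⟨z, z.2, hzv⟩ := Subtype.ext (hz'.resolve_right fun h => hzv h.1)
        have hK : K.Adj ⟨x, x.2, hx⟩ ⟨z, z.2, hzv⟩ := hoff x z hxz hx hzv
        exact hK.reachable.trans hreach
  refine (connected_iff _).2 ⟨fun x y => ?_, hne.to_subtype⟩
  obtain ⟨p⟩ := hB.preconnected ⟨x, x.2.1⟩ ⟨y, y.2.1⟩
  obtain ⟨z, hz, hreach⟩ := reroute _ _ p y.2.2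
  exact (Subtype.ext (hz.resolve_right fun h => x.2.2 h.1) : z = x) ▸ hreach

theorem HasK4Minor.of_suppress {H H' : SimpleGraph W} {v : W}
    (hdeg : ∀ x y z, H.Adj v x → H.Adj v y → H.Adj v z → x = y ∨ x = z ∨ y = z)
    (hoff : ∀ x y, H.Adj x y → x ≠ v → y ≠ v → H'.Adj x y)
    (hnbr : ∀ x y, H.Adj v x → H.Adj v y → x ≠ y → H'.Adj x y)
    (hH : HasK4Minor H) : HasK4Minor H' := by
  obtain ⟨B, hne, hconn, hdisj, hadj⟩ := hH
  have hsep : ∀ i j, i ≠ j → ∀ x ∈ B i, ∀ y ∈ B j, x ≠ y := fun i j hij x hx y hy =>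
    (hdisj i j hij).ne_of_mem hx hy
  -- a branch set equal to `{v}` would give `v` neighbours in three disjoint branch sets
  have hne' : ∀ i, (B i \ {v}).Nonempty := by
    intro i
    by_contra hempty
    have hsub : B i ⊆ {v} := Set.sdiff_eq_empty.1 (Set.not_nonempty_iff_eq_empty.1 hempty)
    have hnbrs : ∀ j, i ≠ j → ∃ w ∈ B j, H.Adj v w := fun j hij => by
      obtain ⟨u, hu, w, hw, huw⟩ := hadj i j hij
      exact ⟨w, hw, hsub hu ▸ huw⟩
    obtain ⟨x, hx, hvx⟩ := hnbrs (i + 1) (by fin_cases i <;> decide)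
    obtain ⟨y, hy, hvy⟩ := hnbrs (i + 2) (by fin_cases i <;> decide)
    obtain ⟨z, hz, hvz⟩ := hnbrs (i + 3) (by fin_cases i <;> decide)
    rcases hdeg x y z hvx hvy hvz with hxy | hxz | hyz
    · exact hsep _ _ (by fin_cases i <;> decide) x hx y hy hxy
    · exact hsep _ _ (by fin_cases i <;> decide) x hx z hz hxz
    · exact hsep _ _ (by fin_cases i <;> decide) y hy z hz hyz
  have hcross : ∀ i j, i ≠ j → ∀ u ∈ B i, ∀ w ∈ B j, H.Adj u w → w ≠ v →
      ∃ u' ∈ B i \ {v}, H'.Adj u' w := by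
    intro i j hij u hu w hw huw hwv
    by_cases huv : u = v
    · subst huv
      obtain ⟨c, hc, hcu⟩ := hne' i
      have : Nontrivial (B i) := Set.nontrivial_coe_sort.2 ⟨c, hc, u, hu, hcu⟩
      obtain ⟨c, huc⟩ := (hconn i).preconnected.exists_adj_of_nontrivial ⟨u, hu⟩
      have huc : H.Adj u c := huc
      exact ⟨c, ⟨c.2, huc.ne'⟩, hnbr c w huc huw (hsep i j hij c c.2 w hw)⟩
    · exact ⟨u, ⟨hu, huv⟩, hoff u w huw huv hwv⟩
  refine ⟨fun i => B i \ {v}, hne', fun i => induce_diff_singleton_connected (hconn i) (hne' i)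
    hoff hnbr, fun i j hij => (hdisj i j hij).mono Set.sdiff_subset Set.sdiff_subset,
    fun i j hij => ?_⟩
  obtain ⟨u, hu, w, hw, huw⟩ := hadj i j hij
  by_cases hwv : w = v
  · obtain ⟨w', hw', hw'u⟩ := hcross j i hij.symm w hw u hu huw.symm (hwv ▸ huw.ne)
    exact ⟨u, ⟨hu, hwv ▸ huw.ne⟩, w', hw', hw'u.symm⟩
  · obtain ⟨u', hu', hu'w⟩ := hcross i j hij u hu w hw huw hwv
    exact ⟨u', hu', w, ⟨hw, hwv⟩, hu'w⟩

namespace SimpleGraph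

/-- Meant for `v` with neighbourhood `{a, b}`; when `a = b` (degree one) no edge is added. -/
def suppress (G : SimpleGraph V) (v a b : V) : SimpleGraph V :=
  G.deleteIncidenceSet v ⊔ edge a b

variable {G : SimpleGraph V} {v a b : V}

theorem adj_iff_of_neighborSet_eq (hN : G.neighborSet v = {a, b}) {x : V} :
    G.Adj v x ↔ x = a ∨ x = b := by
  rw [← mem_neighborSet, hN, Set.mem_insert_iff, Set.mem_singleton_iff]

theorem suppress_adj_of_ne {x y : V} (h : G.Adj x y) (hx : x ≠ v) (hy : y ≠ v) :
    (G.suppress v a b).Adj x y :=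
  Or.inl (deleteIncidenceSet_adj.2 ⟨h, hx, hy⟩)

theorem neighborSet_deleteIncidenceSet_self (G : SimpleGraph V) (v : V) :
    (G.deleteIncidenceSet v).neighborSet v = ∅ :=
  Set.eq_empty_of_forall_notMem fun _ h => (deleteIncidenceSet_adj.1 h).2.1 rfl

theorem neighborSet_deleteIncidenceSet_of_ne {w : V} (hw : w ≠ v) :
    (G.deleteIncidenceSet v).neighborSet w = G.neighborSet w \ {v} := by
  ext y
  simp [deleteIncidenceSet_adj, hw]

theorem neighborSet_suppress_self (hN : G.neighborSet v = {a, b}) :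
    (G.suppress v a b).neighborSet v = ∅ := by
  have hva : v ≠ a := ((adj_iff_of_neighborSet_eq hN).2 (Or.inl rfl)).ne
  have hvb : v ≠ b := ((adj_iff_of_neighborSet_eq hN).2 (Or.inr rfl)).ne
  refine Set.eq_empty_of_forall_notMem fun y h => ?_
  rcases h with h | h
  · exact (deleteIncidenceSet_adj.1 h).2.1 rfl
  · rcases ((edge_adj a b v y).1 h).1 with ⟨h, -⟩ | ⟨h, -⟩
    exacts [hva h, hvb h]

theorem ncard_neighborSet_suppress_le [Finite V] (hN : G.neighborSet v = {a, b}) (w : V) :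
    ((G.suppress v a b).neighborSet w).ncard ≤ (G.neighborSet w).ncard := by
  classical
  -- at `w ∈ {a, b}` the edge `ab` takes the place of the edge `wv`
  let c := if w = a then b else a
  refine (Set.ncard_le_ncard (t := Function.update id v c '' G.neighborSet w) ?_).trans
    (Set.ncard_image_le (Set.toFinite _))
  rintro y (h | h)
  · obtain ⟨hwy, -, hyv⟩ := deleteIncidenceSet_adj.1 h
    exact ⟨y, hwy, Function.update_of_ne hyv _ _⟩
  · obtain ⟨⟨rfl, rfl⟩ | ⟨rfl, rfl⟩, hne⟩ := (edge_adj a b w y).1 h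
    · exact ⟨v, ((adj_iff_of_neighborSet_eq hN).2 (Or.inl rfl)).symm, by simp [c]⟩
    · exact ⟨v, ((adj_iff_of_neighborSet_eq hN).2 (Or.inr rfl)).symm, by simp [c, hne]⟩

theorem sum_ncard_neighborSet [Fintype V] (G : SimpleGraph V) :
    ∑ w, (G.neighborSet w).ncard = 2 * G.edgeSet.ncard := by
  classical
  simp_rw [Set.ncard_eq_toFinset_card', Set.toFinset_card, card_neighborSet_eq_degree,
    sum_degrees_eq_twice_card_edges, edgeFinset_card]

end SimpleGraph

theorem IsTransversal.insert_of_deleteIncidenceSet [DecidableEq V] {G : SimpleGraph V} {v : V}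
    {X : Finset V}
    (hX : IsTransversal (G.deleteIncidenceSet v) X) : IsTransversal G (insert v X) := by
  have hsub : ((↑(insert v X) : Set V)ᶜ) ⊆ (↑X : Set V)ᶜ :=
    Set.compl_subset_compl.2 (by simp)
  have hne : ∀ x : ↥((↑(insert v X) : Set V)ᶜ), (x : V) ≠ v := fun x hx => x.2 (by simp [hx])
  exact fun hG => hX (hG.map ⟨Set.inclusion hsub,
    fun {x y} h => deleteIncidenceSet_adj.2 ⟨h, hne x, hne y⟩⟩ (Set.inclusion_injective hsub))

theorem IsTransversal.of_suppress {G : SimpleGraph V} {v a b : V} {X : Finset V}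
    (hN : G.neighborSet v = {a, b}) (hX : IsTransversal (G.suppress v a b) X) :
    IsTransversal G X := by
  intro hG
  by_cases hv : v ∈ X
  · have hne : ∀ x : ↥((↑X : Set V)ᶜ), (x : V) ≠ v := fun x hx => x.2 (hx ▸ hv)
    exact hX (hG.map ⟨id, fun {x y} h => suppress_adj_of_ne h (hne x) (hne y)⟩
      Function.injective_id)
  refine hX (hG.of_suppress (v := ⟨v, hv⟩) ?_ ?_ ?_)
  · intro x y z hx hy hz
    simp only [comap_adj, Function.Embedding.coe_subtype, Subtype.ext_iff] at hx hy hz ⊢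
    rw [adj_iff_of_neighborSet_eq hN] at hx hy hz
    rcases hx with hx | hx <;> rcases hy with hy | hy <;> rcases hz with hz | hz <;>
      simp only [hx, hy, hz, true_or, or_true]
  · intro x y h hx hy
    exact suppress_adj_of_ne h (Subtype.coe_ne_coe.2 hx) (Subtype.coe_ne_coe.2 hy)
  · intro x y hx hy hxy
    have hx : (x : V) = a ∨ (x : V) = b := (adj_iff_of_neighborSet_eq hN).1 hx
    have hy : (y : V) = a ∨ (y : V) = b := (adj_iff_of_neighborSet_eq hN).1 hy
    have hxy : (x : V) ≠ y := Subtype.coe_ne_coe.2 hxy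
    refine Or.inr ((edge_adj a b x y).2 ⟨?_, hxy⟩)
    rcases hx with hx | hx <;> rcases hy with hy | hy <;> simp_all

noncomputable def degWeight (d : ℕ) : ℝ := if d ≤ 2 then 0 else 1 - 3 / (d + 1)

theorem degWeight_of_le_two {d : ℕ} (h : d ≤ 2) : degWeight d = 0 := if_pos h

theorem degWeight_of_three_le {d : ℕ} (h : 3 ≤ d) : degWeight d = 1 - 3 / (d + 1) :=
  if_neg (by omega)

theorem degWeight_nonneg (d : ℕ) : 0 ≤ degWeight d := by
  rcases le_or_gt d 2 with h | h
  · rw [degWeight_of_le_two h]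
  · rw [degWeight_of_three_le h, sub_nonneg, div_le_one (by positivity)]
    have : (3 : ℝ) ≤ d := by exact_mod_cast h
    linarith

theorem degWeight_monotone : Monotone degWeight := by
  intro d e hde
  rcases le_or_gt d 2 with hd | hd
  · exact (degWeight_of_le_two hd).symm ▸ degWeight_nonneg e
  rw [degWeight_of_three_le hd, degWeight_of_three_le (hd.trans_le hde)]
  have : (d : ℝ) ≤ e := by exact_mod_cast hde
  gcongr

theorem degWeight_le (d : ℕ) : degWeight d ≤ d / 10 := by
  rcases le_or_gt d 2 with hd | hd
  · rw [degWeight_of_le_two hd]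
    positivity
  rw [degWeight_of_three_le hd, sub_le_iff_le_add, ← sub_le_iff_le_add',
    le_div_iff₀ (by positivity)]
  -- equivalent to `(d - 4) (d - 5) ≥ 0`, which holds at every integer
  have : (0 : ℝ) ≤ (d - 4) * (d - 5) := by
    rcases le_or_gt d 4 with h | h
    · have : (d : ℝ) ≤ 4 := by exact_mod_cast h
      nlinarith
    · have : (5 : ℝ) ≤ d := by exact_mod_cast h
      nlinarith
  nlinarith

theorem div_le_degWeight_sub_degWeight_pred {d D : ℕ} (hd : 3 ≤ d) (hdD : d ≤ D) :
    3 / (D * (D + 1)) ≤ degWeight d - degWeight (d - 1) := by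
  have hd' : (3 : ℝ) ≤ d := by exact_mod_cast hd
  have hdD' : (d : ℝ) ≤ D := by exact_mod_cast hdD
  rcases hd.eq_or_lt with rfl | hd4
  · rw [degWeight_of_three_le le_rfl, degWeight_of_le_two (by norm_num),
      div_le_iff₀ (by positivity)]
    norm_num
    nlinarith
  · have hcast : ((d - 1 : ℕ) : ℝ) = d - 1 := by push_cast [(by omega : 1 ≤ d)]; ring
    rw [degWeight_of_three_le hd, degWeight_of_three_le (by omega), hcast, sub_add_cancel]
    calc 3 / (D * (D + 1) : ℝ) ≤ 3 / (d * (d + 1)) := by gcongr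
      _ = 1 - 3 / (d + 1) - (1 - 3 / d) := by field_simp; ring

section Potential

variable [Fintype V]

noncomputable def potential (G : SimpleGraph V) : ℝ := ∑ w, degWeight (G.neighborSet w).ncard

theorem potential_nonneg (G : SimpleGraph V) : 0 ≤ potential G :=
  Finset.sum_nonneg fun _ _ => degWeight_nonneg _

theorem potential_mono {G G' : SimpleGraph V}
    (h : ∀ w, (G'.neighborSet w).ncard ≤ (G.neighborSet w).ncard) : potential G' ≤ potential G :=
  Finset.sum_le_sum fun w _ => degWeight_monotone (h w)

theorem potential_deleteIncidenceSet_add_one_le {G : SimpleGraph V} {v : V}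
    (hv : 3 ≤ (G.neighborSet v).ncard)
    (hmax : ∀ w, (G.neighborSet w).ncard ≤ (G.neighborSet v).ncard)
    (hnbr : ∀ w, G.Adj v w → 3 ≤ (G.neighborSet w).ncard) :
    potential (G.deleteIncidenceSet v) + 1 ≤ potential G := by
  classical
  set G' := G.deleteIncidenceSet v
  set D := (G.neighborSet v).ncard
  set N := (G.neighborSet v).toFinset
  set gap : V → ℝ := fun w =>
    degWeight (G.neighborSet w).ncard - degWeight (G'.neighborSet w).ncard
  have hgap : ∀ w, 0 ≤ gap w := fun w => sub_nonneg.2 <| degWeight_monotone <|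
    Set.ncard_le_ncard (neighborSet_mono (deleteIncidenceSet_le G v) w)
  have hgap_self : gap v = degWeight D := by
    simp only [gap, G', neighborSet_deleteIncidenceSet_self, Set.ncard_empty,
      degWeight_of_le_two (Nat.zero_le 2), sub_zero, D]
  have hgap_nbr : ∀ w ∈ N, 3 / (D * (D + 1)) ≤ gap w := by
    intro w hw
    have hvw : G.Adj v w := Set.mem_toFinset.1 hw
    have : (G'.neighborSet w).ncard = (G.neighborSet w).ncard - 1 := by
      rw [neighborSet_deleteIncidenceSet_of_ne hvw.ne',
        Set.ncard_sdiff_singleton_of_mem (s := G.neighborSet w) hvw.symm]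
    simpa only [gap, this] using div_le_degWeight_sub_degWeight_pred (hnbr w hvw) (hmax w)
  have hvN : v ∉ N := fun h => G.loopless.irrefl v (Set.mem_toFinset.1 h)
  have hD : (0 : ℝ) < D := by exact_mod_cast (by omega : 0 < D)
  calc potential G' + 1 = potential G' + (degWeight D + N.card • (3 / (D * (D + 1)))) := by
        rw [degWeight_of_three_le hv, ← Set.ncard_eq_toFinset_card', nsmul_eq_mul]
        field_simp
        ring
    _ ≤ potential G' + ∑ w ∈ insert v N, gap w := by
        rw [Finset.sum_insert hvN, hgap_self]
        gcongr
        exact Finset.card_nsmul_le_sum N gap _ hgap_nbr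
    _ ≤ potential G' + ∑ w, gap w := by
        gcongr
        · exact fun w _ _ => hgap w
        · exact Finset.subset_univ _
    _ = potential G := by simp [gap, potential, Finset.sum_sub_distrib]

theorem potential_le_ncard_edgeSet_div_five (G : SimpleGraph V) :
    potential G ≤ G.edgeSet.ncard / 5 :=
  calc potential G ≤ ∑ w, ((G.neighborSet w).ncard : ℝ) / 10 :=
        Finset.sum_le_sum fun w _ => degWeight_le _
    _ = G.edgeSet.ncard / 5 := by
        rw [← Finset.sum_div, ← Nat.cast_sum, sum_ncard_neighborSet]
        push_cast
        ring

end Potential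

theorem exists_isTransversal_card_le_potential [Fintype V] (G : SimpleGraph V) :
    ∃ X : Finset V, IsTransversal G X ∧ (X.card : ℝ) ≤ potential G := by
  classical
  induction hn : ∑ w, (G.neighborSet w).ncard using Nat.strong_induction_on generalizing G with
  | _ n ih =>
  subst hn
  have descend : ∀ G' : SimpleGraph V,
      (∀ w, (G'.neighborSet w).ncard ≤ (G.neighborSet w).ncard) →
      (∃ v, (G'.neighborSet v).ncard < (G.neighborSet v).ncard) →
      ∃ X : Finset V, IsTransversal G' X ∧ (X.card : ℝ) ≤ potential G' :=
    fun G' hle ⟨v, hlt⟩ =>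
      ih _ (Finset.sum_lt_sum (fun w _ => hle w) ⟨v, Finset.mem_univ v, hlt⟩) G' rfl
  by_cases hedge : ∀ x y, ¬ G.Adj x y
  · exact ⟨∅, isTransversal_of_forall_not_adj hedge ∅, by simpa using potential_nonneg G⟩
  obtain ⟨x, y, hxy⟩ : ∃ x y, G.Adj x y := by simpa using hedge
  have hpos : ∀ w z, G.Adj w z → 1 ≤ (G.neighborSet w).ncard := fun w z h =>
    (Set.ncard_pos (Set.toFinite _)).2 ⟨z, h⟩
  by_cases hsmall : ∃ v, 1 ≤ (G.neighborSet v).ncard ∧ (G.neighborSet v).ncard ≤ 2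
  · obtain ⟨v, h₁, h₂⟩ := hsmall
    obtain ⟨a, b, hN⟩ := Set.exists_eq_pair_of_ncard_le_two h₁ h₂
    have hle := ncard_neighborSet_suppress_le hN
    obtain ⟨X, hX, hcard⟩ :=
      descend (G.suppress v a b) hle ⟨v, by rwa [neighborSet_suppress_self hN, Set.ncard_empty]⟩
    exact ⟨X, hX.of_suppress hN, hcard.trans (potential_mono hle)⟩
  push Not at hsmall
  obtain ⟨v, -, hmax⟩ := Finset.exists_max_image Finset.univ (fun w => (G.neighborSet w).ncard)
    ⟨x, Finset.mem_univ x⟩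
  have hbig : ∀ w z, G.Adj w z → 3 ≤ (G.neighborSet w).ncard := fun w z h =>
    hsmall w (hpos w z h)
  have hv : 3 ≤ (G.neighborSet v).ncard := (hbig x y hxy).trans (hmax x (Finset.mem_univ x))
  obtain ⟨X, hX, hcard⟩ := descend (G.deleteIncidenceSet v)
    (fun w => Set.ncard_le_ncard (neighborSet_mono (deleteIncidenceSet_le G v) w))
    ⟨v, by rw [neighborSet_deleteIncidenceSet_self, Set.ncard_empty]; omega⟩
  refine ⟨insert v X, hX.insert_of_deleteIncidenceSet, ?_⟩
  calc ((insert v X).card : ℝ) ≤ X.card + 1 := by exact_mod_cast Finset.card_insert_le v X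
    _ ≤ potential G := by
      linarith [potential_deleteIncidenceSet_add_one_le hv (fun w => hmax w (Finset.mem_univ w))
        (fun w h => hbig w v h.symm)]

end

theorem statement0 {V : Type*} [Fintype V] (G : SimpleGraph V) :
    (transNum G : ℝ) ≤ (G.edgeSet.ncard : ℝ) / 5 := by
  obtain ⟨X, hX, hcard⟩ := exists_isTransversal_card_le_potential G
  calc (transNum G : ℝ) ≤ X.card := mod_cast transNum_le_card hX
    _ ≤ potential G := hcard
    _ ≤ G.edgeSet.ncard / 5 := potential_le_ncard_edgeSet_div_five G
end

section
/- For every integer k ≥ 1, if G is a connected graph obtained from the disjoint union of k copies of K₆ by adding exactly k − 1 edges (between distinct copies, so that the result is connected), then G has m = 16k − 1 edges and s(G) = 3k = (3/16)(m + 1); in particular the bound s(G) ≤ (3/16)(m+1) for connected graphs is tight. -/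
open SimpleGraph

/-- The disjoint union of `k` copies of the complete graph `K_r`,
on the vertex set `Fin k × Fin r` (the first coordinate names the copy). -/
def disjointCliques (k r : ℕ) : SimpleGraph (Fin k × Fin r) where
  Adj a b := a.1 = b.1 ∧ a ≠ b
  symm := ⟨by rintro a b ⟨h1, h2⟩; exact ⟨h1.symm, h2.symm⟩⟩
  loopless := ⟨by rintro a ⟨-, h⟩; exact h rfl⟩

/-!
A transversal must contain three vertices of every copy of `K₆`, for four surviving vertices
of one copy already form a `K₄`. Conversely, contracting the copies turns the `k - 1` added edges
into a spanning tree on the copies, and orienting that tree away from a root assigns every added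
edge to one of its two copies, injectively. Deleting from each copy the endpoint of the edge
assigned to it, padded to three vertices, destroys every added edge, so each component of what
is left has at most three vertices.
-/

open Finset

namespace SimpleGraph

variable {V W : Type*}

theorem Reachable.map_of_adj_eq_or_adj {G : SimpleGraph V} {H : SimpleGraph W} {f : V → W}
    (hf : ∀ u v, G.Adj u v → f u = f v ∨ H.Adj (f u) (f v)) {x y : V} (h : G.Reachable x y) :
    H.Reachable (f x) (f y) := by
  obtain ⟨p⟩ := h
  induction p with
  | nil => rfl
  | cons hadj _ ih => exact (hf _ _ hadj).elim (fun h ↦ h ▸ ih) fun h ↦ h.reachable.trans ih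

theorem IsTree.eq_of_adj_of_dist_eq_add_one {T : SimpleGraph V} (hT : T.IsTree) {r u v w : V}
    (hv : T.Adj v u) (hw : T.Adj w u) (hdv : T.dist r u = T.dist r v + 1)
    (hdw : T.dist r u = T.dist r w + 1) : v = w := by
  obtain ⟨p, -, hp⟩ := (hT.connected r v).exists_path_of_dist
  obtain ⟨q, -, hq⟩ := (hT.connected r w).exists_path_of_dist
  have hpu : (p.concat hv).IsPath := (p.concat hv).isPath_of_length_eq_dist (by simp [hp, hdv])
  have hqu : (q.concat hw).IsPath := (q.concat hw).isPath_of_length_eq_dist (by simp [hq, hdw])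
  have := hT.isAcyclic.subsingleton_path r u |>.elim ⟨_, hpu⟩ ⟨_, hqu⟩
  exact (Walk.concat_inj (Subtype.mk.inj this)).1

theorem IsTree.exists_injective_mem_edge {T : SimpleGraph V} (hT : T.IsTree) :
    ∃ g : T.edgeSet → V, Function.Injective g ∧ ∀ e : T.edgeSet, g e ∈ (e : Sym2 V) := by
  obtain ⟨r⟩ := hT.connected.nonempty
  have hfar : ∀ e : T.edgeSet, ∃ u v, T.Adj u v ∧ (e : Sym2 V) = s(u, v) ∧
      T.dist r u = T.dist r v + 1 := by
    rintro ⟨e, he⟩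
    induction e using Sym2.ind with
    | _ u v =>
      rcases hT.dist_eq_dist_add_one_of_adj r he with h | h
      · exact ⟨u, v, he, rfl, h⟩
      · exact ⟨v, u, he.symm, Sym2.eq_swap, h⟩
  choose g v hadj hedge hdist using hfar
  refine ⟨g, fun e e' hee' ↦ Subtype.ext ?_, fun e ↦ hedge e ▸ Sym2.mem_mk_left _ _⟩
  rw [hedge, hedge, hee', hT.eq_of_adj_of_dist_eq_add_one (hadj e).symm (hee' ▸ (hadj e').symm)
    (hdist e) (hee' ▸ hdist e')]

theorem edgeSet_ncard_sup_fromEdgeSet [Finite V] {H : SimpleGraph V} {F : Finset (Sym2 V)}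
    (hdiag : ∀ e ∈ F, ¬ e.IsDiag) (hdisj : Disjoint H.edgeSet ↑F) :
    (H ⊔ fromEdgeSet ↑F).edgeSet.ncard = H.edgeSet.ncard + #F := by
  have hF : (↑F : Set (Sym2 V)) \ Sym2.diagSet = ↑F :=
    sdiff_eq_left.2 (Set.disjoint_left.2 fun e he ↦ hdiag e he)
  rw [edgeSet_sup, edgeSet_fromEdgeSet, hF, Set.ncard_union_eq hdisj (Set.toFinite _)
    (Set.toFinite _), Set.ncard_coe_finset]

end SimpleGraph

variable {V : Type*}

theorem HasK4Minor.of_not_cliqueFree {H : SimpleGraph V} (h : ¬ H.CliqueFree 4) :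
    HasK4Minor H := by
  let φ := topEmbeddingOfNotCliqueFree h
  refine ⟨fun i ↦ {φ i}, fun i ↦ Set.singleton_nonempty _, fun i ↦ ?_, fun i j hij ↦ ?_,
    fun i j hij ↦ ⟨φ i, rfl, φ j, rfl, φ.map_adj_iff.2 hij⟩⟩
  · rw [induce_singleton_eq_top]
    exact connected_top
  · simpa using φ.injective.ne hij

theorem HasK4Minor.exists_pairwise_reachable {H : SimpleGraph V} (h : HasK4Minor H) :
    ∃ x : Fin 4 → V, Function.Injective x ∧ ∀ i j, H.Reachable (x i) (x j) := by
  obtain ⟨B, hne, hconn, hdisj, hadj⟩ := h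
  have hB : ∀ i, ∀ u ∈ B i, ∀ v ∈ B i, H.Reachable u v := fun i u hu v hv ↦
    ((hconn i).preconnected ⟨u, hu⟩ ⟨v, hv⟩).map (Embedding.induce (B i)).toHom
  refine ⟨fun i ↦ (hne i).some, fun i j hij ↦ ?_, fun i j ↦ ?_⟩
  · by_contra hne'
    have hij : (hne i).some = (hne j).some := hij
    exact Set.disjoint_left.1 (hdisj i j hne') (hne i).some_mem (hij ▸ (hne j).some_mem)
  · rcases eq_or_ne i j with rfl | hij
    · rfl
    obtain ⟨u, hu, v, hv, huv⟩ := hadj i j hij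
    exact (hB i _ (hne i).some_mem u hu).trans (huv.reachable.trans (hB j v hv _ (hne j).some_mem))

theorem HasK4Minor.of_isClique {H : SimpleGraph V} {s : Finset V} (hs : H.IsClique s)
    (h4 : 4 ≤ #s) : HasK4Minor H := by
  obtain ⟨t, hts, ht⟩ := exists_subset_card_eq h4
  exact of_not_cliqueFree (IsNClique.not_cliqueFree ⟨hs.subset hts, ht⟩)

theorem HasK4Minor.induce_of_isClique {G : SimpleGraph V} {S : Set V} {s : Finset V}
    (hs : G.IsClique s) (h4 : 4 ≤ #s) (hsS : ↑s ⊆ S) : HasK4Minor (G.induce S) := by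
  classical
  refine of_isClique (s := s.subtype (· ∈ S)) ?_ ?_
  · rw [isClique_induce_iff]
    exact hs.subset (by simp +contextual [Set.subset_def])
  · rwa [card_subtype, filter_true_of_mem hsS]

theorem transNum_eq {G : SimpleGraph V} {X : Finset V} (hX : IsTransversal G X)
    (hmin : ∀ Y, IsTransversal G Y → #X ≤ #Y) : transNum G = #X :=
  le_antisymm (Nat.sInf_le ⟨X, rfl, hX⟩)
    (le_csInf ⟨_, X, rfl, hX⟩ fun _ ⟨Y, hY, hYt⟩ ↦ hY ▸ hmin Y hYt)

section DisjointCliques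

variable {k r : ℕ}

@[simp]
theorem disjointCliques_adj {a b : Fin k × Fin r} :
    (disjointCliques k r).Adj a b ↔ a.1 = b.1 ∧ a ≠ b := Iff.rfl

instance : DecidableRel (disjointCliques k r).Adj :=
  fun _ _ ↦ decidable_of_iff' _ disjointCliques_adj

theorem disjointCliques_degree (v : Fin k × Fin r) : (disjointCliques k r).degree v = r - 1 := by
  have : (disjointCliques k r).neighborFinset v =
      (univ.map ⟨Prod.mk v.1, Prod.mk_right_injective v.1⟩).erase v := by
    ext w
    simp only [mem_neighborFinset, disjointCliques_adj, mem_erase, mem_map, mem_univ, true_and,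
      Function.Embedding.coeFn_mk]
    constructor
    · rintro ⟨h, hne⟩
      exact ⟨hne.symm, w.2, Prod.ext h rfl⟩
    · rintro ⟨hne, j, rfl⟩
      exact ⟨rfl, hne.symm⟩
  rw [← card_neighborFinset_eq_degree, this, card_erase_of_mem (by simp), card_map, card_univ,
    Fintype.card_fin]

theorem disjointCliques_edgeSet_ncard : (disjointCliques k r).edgeSet.ncard = k * r.choose 2 := by
  have hsum := sum_degrees_eq_twice_card_edges (disjointCliques k r)
  simp only [disjointCliques_degree, sum_const, card_univ, Fintype.card_prod, Fintype.card_fin,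
    smul_eq_mul] at hsum
  obtain ⟨m, hm⟩ := Nat.even_mul_pred_self r
  rw [mul_assoc, hm] at hsum
  rw [← coe_edgeFinset, Set.ncard_coe_finset, Nat.choose_two_right, hm, ← two_mul,
    Nat.mul_div_cancel_left _ two_pos]
  linarith

end DisjointCliques

theorem mul_sub_three_le_card_of_isTransversal {k r : ℕ} {G : SimpleGraph (Fin k × Fin r)}
    (hG : disjointCliques k r ≤ G) {X : Finset (Fin k × Fin r)} (hX : IsTransversal G X) :
    k * (r - 3) ≤ #X := by
  classical
  by_contra! hlt
  obtain ⟨t, rfl⟩ : ∃ t, r = t + 3 := ⟨r - 3, by grind⟩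
  have hcompl : #(univ : Finset (Fin k)) * 3 < #Xᶜ := by
    rw [card_compl, card_univ, Fintype.card_prod, Fintype.card_fin, Fintype.card_fin]
    simp only [Nat.add_sub_cancel] at hlt
    have : k * (t + 3) = k * t + k * 3 := by ring
    omega
  obtain ⟨c, -, hc⟩ := exists_lt_card_fiber_of_mul_lt_card_of_maps_to
    (fun v _ ↦ mem_univ (Prod.fst v)) hcompl
  refine hX (HasK4Minor.induce_of_isClique (s := {v ∈ Xᶜ | v.1 = c}) ?_ hc ?_)
  · intro v hv w hw hvw
    rw [mem_coe, mem_filter] at hv hw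
    exact hG ⟨hv.2.trans hw.2.symm, hvw⟩
  · intro v hv
    rw [mem_coe, mem_filter, mem_compl] at hv
    exact hv.1

section InterCopyEdges

variable {k r : ℕ} {F : Finset (Sym2 (Fin k × Fin r))}

theorem isTransversal_disjointCliques_sup_fromEdgeSet {X : Finset (Fin k × Fin r)}
    (hXF : ∀ e ∈ F, ∃ v ∈ e, v ∈ X) (hX : ∀ c, #{j | (c, j) ∉ X} ≤ 3) :
    IsTransversal (disjointCliques k r ⊔ fromEdgeSet ↑F) X := by
  intro hminor
  obtain ⟨x, hinj, hreach⟩ := hminor.exists_pairwise_reachable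
  have hsame : ∀ i, (x i).1.1 = (x 0).1.1 := by
    refine fun i ↦ reachable_bot.1 ((hreach i 0).map_of_adj_eq_or_adj (H := ⊥)
      (f := fun v ↦ v.1.1) fun u v huv ↦ Or.inl ?_)
    rcases huv with huv | ⟨huvF, -⟩
    · exact huv.1
    · obtain ⟨w, hw, hwX⟩ := hXF _ huvF
      rcases Sym2.mem_iff.1 hw with rfl | rfl
      exacts [absurd hwX u.2, absurd hwX v.2]
  have h4 := card_le_card_of_injOn (s := univ) (t := {j | ((x 0).1.1, j) ∉ X})
    (fun i ↦ (x i).1.2) (fun i _ ↦ by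
      have hi : (x i).1 ∉ X := (x i).2
      simpa [← hsame i] using hi)
    (fun i _ j _ hij ↦ hinj (Subtype.ext (Prod.ext ((hsame i).trans (hsame j).symm) hij)))
  simpa using h4.trans (hX _)

theorem edgeSet_ncard_disjointCliques_sup_fromEdgeSet
    (hF : ∀ e ∈ F, ∃ a b : Fin k × Fin r, e = s(a, b) ∧ a.1 ≠ b.1) :
    (disjointCliques k r ⊔ fromEdgeSet ↑F).edgeSet.ncard = k * r.choose 2 + #F := by
  refine (edgeSet_ncard_sup_fromEdgeSet (fun e he ↦ ?_)
    (Set.disjoint_left.2 fun e he heF ↦ ?_)).trans (by rw [disjointCliques_edgeSet_ncard])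
  · obtain ⟨a, b, rfl, hab⟩ := hF e he
    exact fun h ↦ hab (congrArg Prod.fst (Sym2.mk_isDiag_iff.1 h))
  · obtain ⟨a, b, rfl, hab⟩ := hF e heF
    exact hab he.1

theorem exists_injective_mem_map_fst
    (hF : ∀ e ∈ F, ∃ a b : Fin k × Fin r, e = s(a, b) ∧ a.1 ≠ b.1)
    (hconn : (disjointCliques k r ⊔ fromEdgeSet ↑F).Connected) (hcard : #F + 1 ≤ k) :
    ∃ f : F → Fin k, Function.Injective f ∧
      ∀ e : F, f e ∈ (e : Sym2 (Fin k × Fin r)).map Prod.fst := by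
  classical
  obtain ⟨⟨-, j⟩⟩ := hconn.nonempty
  set Q : SimpleGraph (Fin k) := fromEdgeSet ↑(F.image (Sym2.map Prod.fst))
  have hQedges : Q.edgeSet = ↑(F.image (Sym2.map Prod.fst)) := by
    refine (edgeSet_fromEdgeSet _).trans (sdiff_eq_left.2 (Set.disjoint_left.2 ?_))
    rintro _ he hdiag
    obtain ⟨e, heF, rfl⟩ := mem_image.1 he
    obtain ⟨a, b, rfl, hab⟩ := hF e heF
    exact hab (Sym2.mk_isDiag_iff.1 hdiag)
  have hQconn : Q.Connected := by
    have : Nonempty (Fin k) := ⟨hconn.nonempty.some.1⟩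
    refine ⟨fun c d ↦ (hconn (c, j) (d, j)).map_of_adj_eq_or_adj (f := Prod.fst) ?_⟩
    rintro u v (huv | ⟨huvF, -⟩)
    · exact Or.inl huv.1
    · exact (em (u.1 = v.1)).imp_right fun h ↦ ⟨mem_image.2 ⟨_, huvF, rfl⟩, h⟩
  have hQcard : Nat.card Q.edgeSet + 1 = Nat.card (Fin k) := by
    have hlow := hQconn.card_vert_le_card_edgeSet_add_one
    have hup := card_image_le (s := F) (f := Sym2.map Prod.fst)
    rw [Nat.card_coe_set_eq, hQedges, Set.ncard_coe_finset, Nat.card_fin] at hlow ⊢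
    omega
  have hinj : Set.InjOn (Sym2.map Prod.fst) (F : Set (Sym2 (Fin k × Fin r))) := by
    refine card_image_iff.1 (le_antisymm card_image_le ?_)
    rw [Nat.card_coe_set_eq, hQedges, Set.ncard_coe_finset, Nat.card_fin] at hQcard
    omega
  obtain ⟨g, hg, hgmem⟩ :=
    (isTree_iff_connected_and_card.2 ⟨hQconn, hQcard⟩).exists_injective_mem_edge
  have hmem : ∀ e : F, (e : Sym2 (Fin k × Fin r)).map Prod.fst ∈ Q.edgeSet := fun e ↦
    hQedges ▸ mem_coe.2 (mem_image_of_mem _ e.2)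
  refine ⟨fun e ↦ g ⟨_, hmem e⟩, fun e e' hee' ↦ Subtype.ext (hinj e.2 e'.2 ?_),
    fun e ↦ hgmem _⟩
  exact congrArg Subtype.val (hg hee')

theorem exists_one_vertex_per_copy_hitting
    (hF : ∀ e ∈ F, ∃ a b : Fin k × Fin r, e = s(a, b) ∧ a.1 ≠ b.1)
    (hconn : (disjointCliques k r ⊔ fromEdgeSet ↑F).Connected) (hcard : #F + 1 ≤ k) :
    ∃ d : Fin k → Fin r, ∀ e ∈ F, ∃ c, (c, d c) ∈ e := by
  obtain ⟨f, hf, hfmem⟩ := exists_injective_mem_map_fst hF hconn hcard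
  have hd : ∀ c, ∃ j, ∀ e : F, f e = c → (c, j) ∈ (e : Sym2 (Fin k × Fin r)) := by
    intro c
    by_cases hc : ∃ e, f e = c
    · obtain ⟨e, rfl⟩ := hc
      obtain ⟨v, hv, hve⟩ := Sym2.mem_map.1 (hfmem e)
      exact ⟨v.2, fun e' he' ↦ by rw [hf he', ← hve]; exact hv⟩
    · exact ⟨hconn.nonempty.some.2, fun e he ↦ absurd ⟨e, he⟩ hc⟩
  choose d hd using hd
  exact ⟨d, fun e he ↦ ⟨f ⟨e, he⟩, hd _ ⟨e, he⟩ rfl⟩⟩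

theorem transNum_disjointCliques_sup_fromEdgeSet
    (hF : ∀ e ∈ F, ∃ a b : Fin k × Fin r, e = s(a, b) ∧ a.1 ≠ b.1)
    (hr4 : 4 ≤ r) (hr6 : r ≤ 6) (hconn : (disjointCliques k r ⊔ fromEdgeSet ↑F).Connected)
    (hcard : #F + 1 ≤ k) :
    transNum (disjointCliques k r ⊔ fromEdgeSet ↑F) = k * (r - 3) := by
  classical
  obtain ⟨d, hd⟩ := exists_one_vertex_per_copy_hitting hF hconn hcard
  have hK : ∀ c, ∃ K : Finset (Fin r), d c ∈ K ∧ #K = r - 3 := fun c ↦ by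
    obtain ⟨K, hdK, -, hK⟩ := exists_subsuperset_card_eq (n := r - 3) (subset_univ {d c})
      (by rw [card_singleton]; omega) (by simp)
    exact ⟨K, singleton_subset_iff.1 hdK, hK⟩
  choose K hdK hKcard using hK
  set X := (univ.sigma K).map (Equiv.sigmaEquivProd (Fin k) (Fin r)).toEmbedding
  have hmemX : ∀ v, v ∈ X ↔ v.2 ∈ K v.1 := fun v ↦ by simp [X]
  have hXcard : #X = k * (r - 3) := by simp [X, hKcard]
  have hX : IsTransversal (disjointCliques k r ⊔ fromEdgeSet ↑F) X := by
    refine isTransversal_disjointCliques_sup_fromEdgeSet (fun e he ↦ ?_) fun c ↦ ?_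
    · obtain ⟨c, hc⟩ := hd e he
      exact ⟨_, hc, (hmemX _).2 (hdK c)⟩
    · simp only [hmemX]
      rw [filter_not, filter_mem_eq_inter, univ_inter, card_sdiff, inter_univ, hKcard, card_univ,
        Fintype.card_fin]
      omega
  rw [← hXcard]
  exact transNum_eq hX fun Y hY ↦ hXcard ▸ mul_sub_three_le_card_of_isTransversal le_sup_left hY

end InterCopyEdges

theorem statement3_general (k : ℕ)
    (F : Finset (Sym2 (Fin k × Fin 6)))
    (hFcard : F.card = k - 1)
    (hFbetween : ∀ e ∈ F, ∃ a b : Fin k × Fin 6, e = s(a, b) ∧ a.1 ≠ b.1)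
    (G : SimpleGraph (Fin k × Fin 6))
    (hG : G = disjointCliques k 6 ⊔ SimpleGraph.fromEdgeSet (↑F : Set (Sym2 (Fin k × Fin 6))))
    (hconn : G.Connected) :
    G.edgeSet.ncard = 16 * k - 1 ∧ transNum G = 3 * k ∧
      (transNum G : ℝ) = (3 / 16) * ((G.edgeSet.ncard : ℝ) + 1) := by
  subst hG
  have hk : 0 < k := Fin.pos hconn.nonempty.some.1
  have hedges := edgeSet_ncard_disjointCliques_sup_fromEdgeSet hFbetween
  have htrans := transNum_disjointCliques_sup_fromEdgeSet hFbetween (by norm_num) le_rfl hconn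
    (by omega)
  rw [hFcard, show Nat.choose 6 2 = 15 from rfl] at hedges
  rw [show 6 - 3 = 3 from rfl, mul_comm] at htrans
  refine ⟨by omega, htrans, ?_⟩
  rw [htrans, hedges, Nat.cast_add, Nat.cast_sub hk]
  push_cast
  ring

/-- If `G` is a connected graph obtained from the disjoint union of `k` copies of `K₆`
by adding exactly `k - 1` edges between distinct copies, then `G` has `16k - 1` edges
and `s(G) = 3k`. -/
theorem statement3 (k : ℕ) (hk : 1 ≤ k)
    (F : Finset (Sym2 (Fin k × Fin 6)))
    (hFcard : F.card = k - 1)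
    (hFbetween : ∀ e ∈ F, ∃ a b : Fin k × Fin 6, e = s(a, b) ∧ a.1 ≠ b.1)
    (G : SimpleGraph (Fin k × Fin 6))
    (hG : G = disjointCliques k 6 ⊔ SimpleGraph.fromEdgeSet (↑F : Set (Sym2 (Fin k × Fin 6))))
    (hconn : G.Connected) :
    G.edgeSet.ncard = 16 * k - 1 ∧ transNum G = 3 * k ∧
      (transNum G : ℝ) = (3 / 16) * ((G.edgeSet.ncard : ℝ) + 1) :=
  statement3_general k F hFcard hFbetween G hG hconn
end

section
/- Let G be a finite simple graph and let v be a vertex of G of degree exactly 2 whose two neighbors are adjacent (i.e., v lies in a triangle). Then s(G − v) = s(G). -/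
open SimpleGraph

theorem Nat.sInf_eq_sInf_of_forall_exists_le {A B : Set ℕ} (hAB : ∀ a ∈ A, ∃ b ∈ B, b ≤ a)
    (hBA : ∀ b ∈ B, ∃ a ∈ A, a ≤ b) : sInf A = sInf B := by
  rcases A.eq_empty_or_nonempty with rfl | hA
  · have hB : B = ∅ := Set.eq_empty_of_forall_notMem fun b hb => by simpa using hBA b hb
    rw [hB]
  have hB : B.Nonempty := let ⟨b, hb, _⟩ := hAB _ hA.some_mem; ⟨b, hb⟩
  obtain ⟨b, hb, hba⟩ := hAB _ (Nat.sInf_mem hA)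
  obtain ⟨a, ha, hab⟩ := hBA _ (Nat.sInf_mem hB)
  exact le_antisymm ((Nat.sInf_le ha).trans hab) ((Nat.sInf_le hb).trans hba)

namespace SimpleGraph

variable {V W : Type*} {G : SimpleGraph V} {H : SimpleGraph W}

theorem Connected.induce_image (f : G →g H) {B : Set V} (hB : (G.induce B).Connected) :
    (H.induce (f '' B)).Connected :=
  hB.map (induceHom f (Set.mapsTo_image f B)) fun ⟨_, u, hu, rfl⟩ => ⟨⟨u, hu⟩, rfl⟩

theorem Connected.induce_preimage_val {S B : Set V} (hBS : B ⊆ S) (hB : (G.induce B).Connected) :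
    ((G.induce S).induce (Subtype.val ⁻¹' B)).Connected :=
  hB.map (⟨fun u => ⟨⟨u, hBS u.2⟩, u.2⟩, id⟩ : G.induce B →g (G.induce S).induce _)
    fun ⟨⟨u, _⟩, hu⟩ => ⟨⟨u, hu⟩, rfl⟩

theorem Preconnected.induce_diff_singleton {v : V} (hclique : G.IsClique (G.neighborSet v))
    {B : Set V} (hB : (G.induce B).Preconnected) : (G.induce (B \ {v})).Preconnected := by
  -- A walk from `a` to `b` entering `v` is shortcut through the clique around `v`; so we track
  -- a vertex `a'` that is `a` itself, or a neighbour of `a = v`.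
  suffices key : ∀ {a b : B} (_ : (G.induce B).Walk a b) (a' : ↥(B \ {v})) (hb : b.1 ≠ v),
      (a'.1 = a ∨ (a.1 = v ∧ G.Adj v a')) → (G.induce (B \ {v})).Reachable a' ⟨b, b.2, hb⟩ by
    rintro a ⟨b, hbB, hbv⟩
    exact key (hB ⟨a, a.2.1⟩ ⟨b, hbB⟩).some a hbv (Or.inl rfl)
  intro a b p
  induction p with
  | nil =>
    rintro ⟨a', ha'B, ha'v⟩ hb (h | ⟨h, -⟩)
    · subst h; rfl
    · exact absurd h hb
  | @cons a c b hac q ih =>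
    rintro a' hb (ha' | ⟨hav, hva'⟩)
    · by_cases hcv : c.1 = v
      · exact ih a' hb (Or.inr ⟨hcv, hcv ▸ ha' ▸ hac.symm⟩)
      · have ha'c : G.Adj a' c := ha' ▸ hac
        exact Adj.reachable (u := a') (v := ⟨c, c.2, hcv⟩) ha'c |>.trans (ih _ hb (Or.inl rfl))
    · have hvc : G.Adj v c := hav ▸ hac
      by_cases ha'c : a'.1 = c
      · exact ih a' hb (Or.inl ha'c)
      · exact Adj.reachable (u := a') (v := ⟨c, c.2, hvc.ne'⟩)
          (hclique hva' hvc ha'c) |>.trans (ih _ hb (Or.inl rfl))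

def IsK4Model (G : SimpleGraph V) (B : Fin 4 → Set V) : Prop :=
  (∀ i, (B i).Nonempty) ∧
    (∀ i, (G.induce (B i)).Connected) ∧
    (∀ i j, i ≠ j → Disjoint (B i) (B j)) ∧
    (∀ i j, i ≠ j → ∃ u ∈ B i, ∃ v ∈ B j, G.Adj u v)

namespace IsK4Model

variable {B : Fin 4 → Set V} {v : V}

theorem image (hB : IsK4Model G B) (f : G →g H) (hf : Function.Injective f) :
    IsK4Model H fun i => f '' B i := by
  obtain ⟨hne, hconn, hdisj, hadj⟩ := hB
  refine ⟨fun i => (hne i).image f, fun i => (hconn i).induce_image f,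
    fun i j hij => Set.disjoint_image_of_injective hf (hdisj i j hij), fun i j hij => ?_⟩
  obtain ⟨u, hu, w, hw, huw⟩ := hadj i j hij
  exact ⟨f u, ⟨u, hu, rfl⟩, f w, ⟨w, hw, rfl⟩, f.map_adj huw⟩

theorem preimage_val {S : Set V} (hB : IsK4Model G B) (hBS : ∀ i, B i ⊆ S) :
    IsK4Model (G.induce S) fun i => Subtype.val ⁻¹' B i := by
  obtain ⟨hne, hconn, hdisj, hadj⟩ := hB
  refine ⟨fun i => ?_, fun i => (hconn i).induce_preimage_val (hBS i),
    fun i j hij => (hdisj i j hij).preimage _, fun i j hij => ?_⟩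
  · obtain ⟨u, hu⟩ := hne i
    exact ⟨⟨u, hBS i hu⟩, hu⟩
  · obtain ⟨u, hu, w, hw, huw⟩ := hadj i j hij
    exact ⟨⟨u, hBS i hu⟩, hu, ⟨w, hBS j hw⟩, hw, huw⟩

theorem three_le_encard_neighborSet (hB : IsK4Model G B) {i : Fin 4} (hi : B i = {v}) :
    3 ≤ (G.neighborSet v).encard := by
  obtain ⟨-, -, hdisj, hadj⟩ := hB
  have hnbr : ∀ j ∈ ({i}ᶜ : Set (Fin 4)), ∃ w ∈ B j, G.Adj v w := by
    intro j hj
    obtain ⟨u, hu, w, hw, huw⟩ := hadj i j (Ne.symm hj)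
    exact ⟨w, hw, Set.mem_singleton_iff.1 (hi ▸ hu) ▸ huw⟩
  have : Nonempty V := ⟨v⟩
  choose! f hfB hfv using hnbr
  have hinj : Set.InjOn f {i}ᶜ := by
    intro j hj k hk hjk
    by_contra hne
    exact (hdisj j k hne).ne_of_mem (hfB j hj) (hfB k hk) hjk
  calc (3 : ℕ∞) = ({i}ᶜ : Set (Fin 4)).encard := by
        rw [Set.encard_eq_coe_toFinset_card]; simp [Finset.card_compl]
    _ = (f '' {i}ᶜ).encard := hinj.encard_image.symm
    _ ≤ (G.neighborSet v).encard := Set.encard_le_encard (Set.image_subset_iff.2 hfv)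

theorem diff_singleton (hB : IsK4Model G B) (hclique : G.IsClique (G.neighborSet v))
    (hdeg : (G.neighborSet v).encard ≤ 2) : IsK4Model G fun i => B i \ {v} := by
  have hne : ∀ i, (B i \ {v}).Nonempty := fun i => Set.sdiff_nonempty.2 fun hsub =>
    absurd (hB.three_le_encard_neighborSet ((hB.1 i).subset_singleton_iff.1 hsub))
      (by simpa using hdeg.trans_lt (by norm_num))
  obtain ⟨-, hconn, hdisj, hadj⟩ := hB
  -- `v` has a neighbour `c` in its own branch set, and the neighbours `c ≠ w` of `v` are adjacent
  have reroute : ∀ i j w, i ≠ j → v ∈ B i → w ∈ B j → G.Adj v w →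
      ∃ c ∈ B i \ {v}, G.Adj c w := by
    intro i j w hij hv hw hvw
    obtain ⟨z, hz, hzv⟩ := hne i
    have : Nontrivial (B i) := ⟨⟨⟨v, hv⟩, ⟨z, hz⟩, fun h => hzv (congrArg Subtype.val h).symm⟩⟩
    obtain ⟨c, hvc⟩ := (hconn i).preconnected.exists_adj_of_nontrivial ⟨v, hv⟩
    refine ⟨c, ⟨c.2, fun h => hvc.ne' (Subtype.ext h)⟩, hclique hvc hvw fun hcw => ?_⟩
    exact (hdisj i j hij).ne_of_mem c.2 hw hcw
  refine ⟨hne, fun i => ?_, fun i j hij => (hdisj i j hij).mono Set.sdiff_subset Set.sdiff_subset,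
    fun i j hij => ?_⟩
  · have := (hne i).to_subtype
    exact ⟨(hconn i).preconnected.induce_diff_singleton hclique⟩
  · obtain ⟨u, hu, w, hw, huw⟩ := hadj i j hij
    by_cases huv : u = v
    · subst huv
      obtain ⟨c, hc, hcw⟩ := reroute i j w hij hu hw huw
      exact ⟨c, hc, w, ⟨hw, huw.ne'⟩, hcw⟩
    by_cases hwv : w = v
    · subst hwv
      obtain ⟨c, hc, hcu⟩ := reroute j i u hij.symm hw hu huw.symm
      exact ⟨u, ⟨hu, huv⟩, c, hc, hcu.symm⟩
    exact ⟨u, ⟨hu, huv⟩, w, ⟨hw, hwv⟩, huw⟩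

end IsK4Model

theorem hasK4Minor_induce_iff {S : Set V} :
    HasK4Minor (G.induce S) ↔ ∃ B, IsK4Model G B ∧ ∀ i, B i ⊆ S := by
  constructor
  · rintro ⟨B, hB⟩
    exact ⟨_, IsK4Model.image hB (Embedding.induce S).toHom Subtype.val_injective,
      fun i => Set.image_subset_iff.2 fun u _ => u.2⟩
  · rintro ⟨B, hB, hBS⟩
    exact ⟨_, hB.preimage_val hBS⟩

theorem IsTransversal.induce {X : Finset V} (hX : IsTransversal G X) (S : Set V)
    [DecidablePred (· ∈ S)] :
    IsTransversal (G.induce S) (X.subtype (· ∈ S)) := by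
  rintro h
  obtain ⟨B, hB, hBX⟩ := hasK4Minor_induce_iff.1 h
  refine hX (hasK4Minor_induce_iff.2 ⟨_, hB.image (Embedding.induce S).toHom
    Subtype.val_injective, fun i => ?_⟩)
  rintro _ ⟨u, hu, rfl⟩ huX
  exact hBX i hu (by simpa using huX)

theorem IsTransversal.of_induce_ne {v : V} (hclique : G.IsClique (G.neighborSet v))
    (hdeg : (G.neighborSet v).encard ≤ 2) {X : Finset {u | u ≠ v}}
    (hX : IsTransversal (G.induce {u | u ≠ v}) X) :
    IsTransversal G (X.map (Function.Embedding.subtype _)) := by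
  rintro h
  obtain ⟨B, hB, hBX⟩ := hasK4Minor_induce_iff.1 h
  refine hX (hasK4Minor_induce_iff.2 ⟨_, (hB.diff_singleton hclique hdeg).preimage_val
    fun i u hu => hu.2, fun i => ?_⟩)
  rintro u hu huX
  exact hBX i hu.1 (Finset.mem_map_of_mem _ huX)

end SimpleGraph

theorem statement6_general {V : Type*} (G : SimpleGraph V) (v x y : V)
    (hN : G.neighborSet v = {x, y}) (hadj : G.Adj x y) :
    transNum (G.induce {u : V | u ≠ v}) = transNum G := by
  have hclique : G.IsClique (G.neighborSet v) := hN ▸ G.isClique_pair.2 fun _ => hadj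
  have hdeg : (G.neighborSet v).encard ≤ 2 :=
    hN ▸ (Set.encard_insert_le _ _).trans (by norm_num)
  refine Nat.sInf_eq_sInf_of_forall_exists_le ?_ ?_
  · rintro _ ⟨X, rfl, hX⟩
    exact ⟨_, ⟨_, rfl, hX.of_induce_ne hclique hdeg⟩, (Finset.card_map _).le⟩
  · classical
    rintro _ ⟨X, rfl, hX⟩
    exact ⟨_, ⟨_, rfl, hX.induce _⟩,
      (Finset.card_subtype _ _).trans_le (Finset.card_filter_le _ _)⟩

/-- Removing a degree-2 vertex whose two neighbors are adjacent does not change `s(G)`. -/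
theorem statement6 {V : Type*} [Fintype V] (G : SimpleGraph V) (v x y : V)
    (hxy : x ≠ y) (hN : G.neighborSet v = {x, y}) (hadj : G.Adj x y) :
    transNum (G.induce {u : V | u ≠ v}) = transNum G :=
  statement6_general G v x y hN hadj
end

section
/- Let G be a connected critical finite simple graph with at least 2 vertices. Then G is 2-connected. -/
open SimpleGraph

def K4In (G : SimpleGraph V) (S : Set V) : Prop :=
  ∃ B : Fin 4 → Set V,
    (∀ i, (B i).Nonempty) ∧ (∀ i, B i ⊆ S) ∧
    (∀ i, (G.induce (B i)).Connected) ∧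
    (∀ i j, i ≠ j → Disjoint (B i) (B j)) ∧
    (∀ i j, i ≠ j → ∃ u ∈ B i, ∃ v ∈ B j, G.Adj u v)

noncomputable def induceInduceIso (G : SimpleGraph V) (S : Set V) (B : Set S) :
    (G.induce S).induce B ≃g G.induce (Subtype.val '' B) where
  toEquiv := Equiv.Set.image Subtype.val B Subtype.val_injective
  map_rel_iff' := Iff.rfl

theorem hasK4_induce_iff (G : SimpleGraph V) (S : Set V) :
    HasK4Minor (G.induce S) ↔ K4In G S := by
  constructor
  · rintro ⟨B, hne, hconn, hdisj, hedge⟩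
    refine ⟨fun i => Subtype.val '' B i, fun i => (hne i).image _,
      fun i => ?_, fun i => ?_, fun i j hij => ?_, fun i j hij => ?_⟩
    · rintro x ⟨y, -, rfl⟩; exact y.2
    · exact (induceInduceIso G S (B i)).connected_iff.mp (hconn i)
    · exact (hdisj i j hij).image (Set.injOn_of_injective Subtype.val_injective) (Set.subset_univ _) (Set.subset_univ _)
    · obtain ⟨u, hu, w, hw, hadj⟩ := hedge i j hij
      exact ⟨u, ⟨u, hu, rfl⟩, w, ⟨w, hw, rfl⟩, hadj⟩
  · rintro ⟨C, hne, hsub, hconn, hdisj, hedge⟩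
    refine ⟨fun i => Subtype.val ⁻¹' C i, fun i => ?_, fun i => ?_,
      fun i j hij => (hdisj i j hij).preimage _, fun i j hij => ?_⟩
    · obtain ⟨x, hx⟩ := hne i
      exact ⟨⟨x, hsub i hx⟩, hx⟩
    · have himg : Subtype.val '' (Subtype.val ⁻¹' C i : Set S) = C i := by
        rw [Subtype.image_preimage_coe]
        exact Set.inter_eq_right.mpr (hsub i)
      have := (induceInduceIso G S (Subtype.val ⁻¹' C i)).connected_iff
      rw [himg] at this
      exact this.mpr (hconn i)
    · obtain ⟨u, hu, w, hw, hadj⟩ := hedge i j hij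
      exact ⟨⟨u, hsub i hu⟩, hu, ⟨w, hsub j hw⟩, hw, hadj⟩

open Classical in
noncomputable def tv (G : SimpleGraph V) (S : Set V) : ℕ :=
  sInf {n : ℕ | ∃ X : Finset V, ↑X ⊆ S ∧ X.card = n ∧ ¬ K4In G (S \ ↑X)}

lemma k4in_mono {G : SimpleGraph V} {S T : Set V} (h : S ⊆ T) :
    K4In G S → K4In G T := by
  rintro ⟨B, h1, h2, h3, h4, h5⟩
  exact ⟨B, h1, fun i => (h2 i).trans h, h3, h4, h5⟩

lemma k4in_graph_mono {G H : SimpleGraph V} (hle : H ≤ G) {S : Set V} :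
    K4In H S → K4In G S := by
  rintro ⟨B, h1, h2, h3, h4, h5⟩
  refine ⟨B, h1, h2, fun i => (h3 i).mono ?_, h4,
    fun i j hij => ?_⟩
  · intro x y hxy; exact hle hxy
  · obtain ⟨u, hu, w, hw, hadj⟩ := h5 i j hij
    exact ⟨u, hu, w, hw, hle hadj⟩

lemma not_k4in_empty {G : SimpleGraph V} : ¬ K4In G ∅ := by
  rintro ⟨B, h1, h2, -⟩
  obtain ⟨x, hx⟩ := h1 0
  exact (h2 0 hx).elim

lemma tv_set_nonempty [Fintype V] (G : SimpleGraph V) (S : Set V) :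
    {n : ℕ | ∃ X : Finset V, ↑X ⊆ S ∧ X.card = n ∧ ¬ K4In G (S \ ↑X)}.Nonempty := by
  classical
  refine ⟨S.toFinset.card, S.toFinset, by simp, rfl, ?_⟩
  have : S \ ↑S.toFinset = (∅ : Set V) := by simp
  rw [this]; exact not_k4in_empty

lemma tv_spec [Fintype V] (G : SimpleGraph V) (S : Set V) :
    ∃ X : Finset V, ↑X ⊆ S ∧ X.card = tv G S ∧ ¬ K4In G (S \ ↑X) := by
  classical
  have := Nat.sInf_mem (tv_set_nonempty G S)
  obtain ⟨X, h1, h2, h3⟩ := this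
  exact ⟨X, h1, h2, h3⟩

lemma tv_le {G : SimpleGraph V} {S : Set V} {X : Finset V}
    (h1 : ↑X ⊆ S) (h2 : ¬ K4In G (S \ ↑X)) : tv G S ≤ X.card := by
  classical
  exact Nat.sInf_le ⟨X, h1, rfl, h2⟩

lemma tv_mono [Fintype V] (G : SimpleGraph V) {S T : Set V} (h : S ⊆ T) :
    tv G S ≤ tv G T := by
  classical
  obtain ⟨X, hX1, hX2, hX3⟩ := tv_spec G T
  set X' := X.filter (· ∈ S) with hX'
  have hsub : ↑X' ⊆ S := by intro x hx; simp [hX'] at hx; exact hx.2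
  have hdiff : S \ ↑X' = S \ ↑X := by
    ext x; simp [hX']; tauto
  have : ¬ K4In G (S \ ↑X') := by
    rw [hdiff]
    exact fun hk => hX3 (k4in_mono (Set.diff_subset_diff_left h) hk)
  calc tv G S ≤ X'.card := tv_le hsub this
    _ ≤ X.card := Finset.card_filter_le _ _
    _ = tv G T := hX2

lemma transNum_eq_tv [Fintype V] (G : SimpleGraph V) : transNum G = tv G Set.univ := by
  classical
  unfold transNum tv
  congr 1
  ext n
  constructor
  · rintro ⟨X, hc, hT⟩
    refine ⟨X, Set.subset_univ _, hc, ?_⟩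
    rw [show Set.univ \ (↑X : Set V) = (↑X : Set V)ᶜ by simp [Set.compl_eq_univ_diff]]
    exact fun hk => hT ((hasK4_induce_iff G _).mpr hk)
  · rintro ⟨X, -, hc, hk⟩
    refine ⟨X, hc, fun hT => hk ?_⟩
    rw [show Set.univ \ (↑X : Set V) = (↑X : Set V)ᶜ by simp [Set.compl_eq_univ_diff]]
    exact (hasK4_induce_iff G _).mp hT

lemma k4in_deleteEdges_iff {G : SimpleGraph V} {v a : V} {T : Set V}
    (h : v ∉ T ∨ a ∉ T) :
    K4In (G.deleteEdges {s(v,a)}) T ↔ K4In G T := by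
  constructor
  · exact k4in_graph_mono (G.deleteEdges_le _)
  · rintro ⟨B, h1, h2, h3, h4, h5⟩
    have hadj : ∀ x ∈ T, ∀ y ∈ T, G.Adj x y → (G.deleteEdges {s(v,a)}).Adj x y := by
      intro x hx y hy hxy
      rw [SimpleGraph.deleteEdges_adj]
      refine ⟨hxy, ?_⟩
      simp only [Set.mem_singleton_iff, Sym2.eq_iff]
      rintro (⟨rfl, rfl⟩ | ⟨rfl, rfl⟩) <;> tauto
    refine ⟨B, h1, h2, fun i => ?_, h4, fun i j hij => ?_⟩
    · have heq : (G.deleteEdges {s(v,a)}).induce (B i) = G.induce (B i) := by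
        ext ⟨x, hx⟩ ⟨y, hy⟩
        simp only [comap_adj, Function.Embedding.coe_subtype, SimpleGraph.deleteEdges_adj]
        constructor
        · exact fun hh => hh.1
        · intro hh
          exact (SimpleGraph.deleteEdges_adj).mp (hadj x (h2 i hx) y (h2 i hy) hh)
      rw [heq]; exact h3 i
    · obtain ⟨u, hu, w, hw, huw⟩ := h5 i j hij
      exact ⟨u, hu, w, hw, hadj u (h2 i hu) w (h2 j hw) huw⟩

lemma tv_deleteEdges_eq [Fintype V] (G : SimpleGraph V) {v a : V} {S : Set V}
    (h : v ∉ S ∨ a ∉ S) : tv (G.deleteEdges {s(v,a)}) S = tv G S := by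
  unfold tv
  congr 1
  ext n
  have key : ∀ X : Finset V, (v ∉ S \ ↑X ∨ a ∉ S \ ↑X) := by
    intro X; rcases h with h | h
    · exact Or.inl (fun hh => h hh.1)
    · exact Or.inr (fun hh => h hh.1)
  constructor
  · rintro ⟨X, h1, h2, h3⟩
    exact ⟨X, h1, h2, fun hk => h3 ((k4in_deleteEdges_iff (key X)).mpr hk)⟩
  · rintro ⟨X, h1, h2, h3⟩
    exact ⟨X, h1, h2, fun hk => h3 ((k4in_deleteEdges_iff (key X)).mp hk)⟩


lemma walk_stay {G : SimpleGraph V} {A Bs : Set V}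
    (hAB : ∀ a ∈ A, ∀ b ∈ Bs, ¬ G.Adj a b)
    {C : Set V} (hC : C ⊆ A ∪ Bs)
    {x y : C} (w : (G.induce C).Walk x y) (hx : (x : V) ∈ A) : (y : V) ∈ A := by
  induction w with
  | nil => exact hx
  | @cons x u y h p ih =>
    have hu : (u : V) ∈ A := by
      rcases hC u.2 with h' | h'
      · exact h'
      · exact absurd (h : G.Adj x u) (hAB x hx u h')
    exact ih hu

lemma walk_reach_v {G : SimpleGraph V} {A Bs : Set V} {v : V}
    (hvA : v ∉ A)
    (hAB : ∀ a ∈ A, ∀ b ∈ Bs, ¬ G.Adj a b)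
    {C : Set V} (hC : C ⊆ (A ∪ Bs) ∪ {v})
    {x y : C} (w : (G.induce C).Walk x y) (hx : (x : V) ∈ A) (hy : (y : V) = v) :
    (G.induce (C ∩ (A ∪ {v}))).Reachable ⟨x, x.2, Or.inl hx⟩ ⟨y, y.2, Or.inr hy⟩ := by
  induction w with
  | nil => exact absurd (hy ▸ hx) hvA
  | @cons x u y h p ih =>
    by_cases huv : (u : V) = v
    · have hadj : (G.induce (C ∩ (A ∪ {v}))).Adj ⟨x, x.2, Or.inl hx⟩ ⟨u, u.2, Or.inr huv⟩ :=
        (h : G.Adj x u)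
      have hst : (⟨u, u.2, Or.inr huv⟩ : ↥(C ∩ (A ∪ {v}))) = ⟨y, y.2, Or.inr hy⟩ :=
        Subtype.ext ((huv.trans hy.symm : (u : V) = y))
      exact hst ▸ hadj.reachable
    · have hu : (u : V) ∈ A := by
        rcases hC u.2 with (h' | h') | h'
        · exact h'
        · exact absurd (h : G.Adj x u) (hAB x hx u h')
        · exact absurd h' huv
      have hadj : (G.induce (C ∩ (A ∪ {v}))).Adj ⟨x, x.2, Or.inl hx⟩ ⟨u, u.2, Or.inl hu⟩ :=
        (h : G.Adj x u)
      exact hadj.reachable.trans (ih hu hy)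

lemma side_lemma {G : SimpleGraph V} {A Bs : Set V}
    (hAB : ∀ a ∈ A, ∀ b ∈ Bs, ¬ G.Adj a b)
    {C : Set V} (hconn : (G.induce C).Connected) (hC : C ⊆ A ∪ Bs) :
    C ⊆ A ∨ C ⊆ Bs := by
  obtain ⟨x⟩ := hconn.nonempty
  rcases hC x.2 with hx | hx
  · left; intro y hy
    obtain ⟨w⟩ := hconn.preconnected x ⟨y, hy⟩
    exact walk_stay hAB hC w hx
  · right; intro y hy
    have hBA : ∀ b ∈ Bs, ∀ a ∈ A, ¬ G.Adj b a := fun b hb a ha h => hAB a ha b hb h.symm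
    obtain ⟨w⟩ := hconn.preconnected x ⟨y, hy⟩
    exact walk_stay hBA (hC.trans (Set.union_comm A Bs).subset) w hx

lemma k4in_push {G : SimpleGraph V} {A Bs : Set V} {v : V}
    (hvA : v ∉ A)
    (hAB : ∀ a ∈ A, ∀ b ∈ Bs, ¬ G.Adj a b)
    (hcover : ∀ u : V, u = v ∨ u ∈ A ∨ u ∈ Bs)
    {T : Set V} (B : Fin 4 → Set V)
    (h1 : ∀ i, (B i).Nonempty) (h2 : ∀ i, B i ⊆ T)
    (h3 : ∀ i, (G.induce (B i)).Connected)
    (h4 : ∀ i j, i ≠ j → Disjoint (B i) (B j))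
    (h5 : ∀ i j, i ≠ j → ∃ u ∈ B i, ∃ w ∈ B j, G.Adj u w)
    (hall : ∀ j, v ∉ B j → B j ⊆ A) :
    K4In G (T ∩ (A ∪ {v})) := by
  by_cases hv : ∃ i0, v ∈ B i0
  · obtain ⟨i0, hi0⟩ := hv
    have hjA : ∀ j, j ≠ i0 → B j ⊆ A := by
      intro j hj
      refine hall j (fun hvj => ?_)
      exact Set.disjoint_left.mp (h4 j i0 hj) hvj hi0
    set B' : Set V := B i0 ∩ (A ∪ {v}) with hB'def
    have hvB' : v ∈ B' := ⟨hi0, Or.inr rfl⟩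
    have hsubC : B i0 ⊆ (A ∪ Bs) ∪ {v} := by
      intro u hu; rcases hcover u with h | h | h
      · exact Or.inr h
      · exact Or.inl (Or.inl h)
      · exact Or.inl (Or.inr h)
    have hreachv : ∀ z : V, ∀ hz : z ∈ B',
        (G.induce B').Reachable ⟨z, hz⟩ ⟨v, hvB'⟩ := by
      intro z hz
      rcases hz.2 with hzA | hzv
      · obtain ⟨w⟩ := (h3 i0).preconnected ⟨z, hz.1⟩ ⟨v, hi0⟩
        exact walk_reach_v hvA hAB hsubC w hzA rfl
      · have hzv' : z = v := hzv
        subst hzv'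
        exact Reachable.refl _
    have hconn' : (G.induce B').Connected := by
      rw [connected_iff]
      refine ⟨fun x y => ?_, ⟨⟨v, hvB'⟩⟩⟩
      exact (hreachv x.1 x.2).trans (hreachv y.1 y.2).symm
    set Bn : Fin 4 → Set V := Function.update B i0 B' with hBndef
    have hBni0 : Bn i0 = B' := Function.update_self i0 B' B
    have hBnne : ∀ i, i ≠ i0 → Bn i = B i := fun i hi => Function.update_of_ne hi B' B
    have hBnsub : ∀ i, Bn i ⊆ B i := by
      intro i
      by_cases hii : i = i0
      · subst hii; rw [hBni0]; exact Set.inter_subset_left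
      · rw [hBnne i hii]
    have key : ∀ k, k ≠ i0 → ∀ z ∈ B k, ∀ z', z' ∈ B i0 → G.Adj z' z → z' ∈ A ∪ {v} := by
      intro k hk z hz z' hz' hadj
      rcases hsubC hz' with (h' | h') | h'
      · exact Or.inl h'
      · exact absurd hadj (fun hc => hAB z (hjA k hk hz) z' h' hc.symm)
      · exact Or.inr h'
    refine ⟨Bn, fun i => ?_, fun i => ?_, fun i => ?_,
      fun i j hij => ((h4 i j hij).mono (hBnsub i) (hBnsub j)), fun i j hij => ?_⟩
    · by_cases hii : i = i0
      · subst hii; rw [hBni0]; exact ⟨v, hvB'⟩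
      · rw [hBnne i hii]; exact h1 i
    · by_cases hii : i = i0
      · subst hii; rw [hBni0]
        exact fun u hu => ⟨h2 _ hu.1, hu.2⟩
      · rw [hBnne i hii]
        exact fun u hu => ⟨h2 i hu, Or.inl (hjA i hii hu)⟩
    · by_cases hii : i = i0
      · subst hii; rw [hBni0]; exact hconn'
      · rw [hBnne i hii]; exact h3 i
    · obtain ⟨u, hu, w, hw, huw⟩ := h5 i j hij
      have hu' : u ∈ Bn i := by
        by_cases hii : i = i0
        · subst hii; rw [hBni0]
          have hj' := Ne.symm hij
          exact ⟨hu, key j hj' w hw u hu huw⟩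
        · rw [hBnne i hii]; exact hu
      have hw' : w ∈ Bn j := by
        by_cases hjj : j = i0
        · subst hjj; rw [hBni0]
          exact ⟨hw, key i hij u hu w hw huw.symm⟩
        · rw [hBnne j hjj]; exact hw
      exact ⟨u, hu', w, hw', huw⟩
  · push_neg at hv
    exact ⟨B, h1, fun i u hu => ⟨h2 i hu, Or.inl (hall i (hv i) hu)⟩, h3, h4, h5⟩

lemma k4in_split {G : SimpleGraph V} {A Bs : Set V} {v : V}
    (hvA : v ∉ A) (hvB : v ∉ Bs)
    (hAB : ∀ a ∈ A, ∀ b ∈ Bs, ¬ G.Adj a b)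
    (hcover : ∀ u : V, u = v ∨ u ∈ A ∨ u ∈ Bs)
    {T : Set V} (hk : K4In G T) :
    K4In G (T ∩ (A ∪ {v})) ∨ K4In G (T ∩ (Bs ∪ {v})) := by
  obtain ⟨B, h1, h2, h3, h4, h5⟩ := hk
  have hside : ∀ j, v ∉ B j → B j ⊆ A ∨ B j ⊆ Bs := by
    intro j hvj
    refine side_lemma hAB (h3 j) ?_
    intro u hu
    rcases hcover u with h | h | h
    · exact absurd (h ▸ hu) hvj
    · exact Or.inl h
    · exact Or.inr h
  have hBA : ∀ b ∈ Bs, ∀ a ∈ A, ¬ G.Adj b a := fun b hb a ha h => hAB a ha b hb h.symm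
  have hcover' : ∀ u : V, u = v ∨ u ∈ Bs ∨ u ∈ A := by
    intro u; rcases hcover u with h | h | h
    · exact Or.inl h
    · exact Or.inr (Or.inr h)
    · exact Or.inr (Or.inl h)
  by_cases hallA : ∀ j, v ∉ B j → B j ⊆ A
  · exact Or.inl (k4in_push hvA hAB hcover B h1 h2 h3 h4 h5 hallA)
  · push_neg at hallA
    obtain ⟨j0, hvj0, hj0A⟩ := hallA
    have hj0B : B j0 ⊆ Bs := (hside j0 hvj0).resolve_left hj0A
    have hallB : ∀ j, v ∉ B j → B j ⊆ Bs := by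
      intro j hvj
      rcases hside j hvj with hA' | hB'
      · by_cases hjj : j = j0
        · exact absurd (hjj ▸ hA') hj0A
        · obtain ⟨u, hu, w, hw, huw⟩ := h5 j j0 hjj
          exact absurd huw (hAB u (hA' hu) w (hj0B hw))
      · exact hB'
    exact Or.inr (k4in_push hvB hBA hcover' B h1 h2 h3 h4 h5 hallB)

lemma k4in_card [Fintype V] {G : SimpleGraph V} {S : Set V} (h : K4In G S) :
    4 ≤ Fintype.card V := by
  obtain ⟨B, h1, -, -, h4, -⟩ := h
  choose f hf using h1
  have hinj : Function.Injective f := by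
    intro i j hij
    by_contra hne
    exact Set.disjoint_left.mp (h4 i j hne) (hf i) (hij ▸ hf j)
  calc 4 = Fintype.card (Fin 4) := by simp
    _ ≤ Fintype.card V := Fintype.card_le_of_injective f hinj

lemma exists_nbr {G : SimpleGraph V} {A : Set V} {v : V} (hvA : v ∉ A)
    (hclosed : ∀ c ∈ A, ∀ u, G.Adj c u → u = v ∨ u ∈ A)
    {x y : V} (w : G.Walk x y) (hx : x ∈ A) (hy : y = v) : ∃ a ∈ A, G.Adj v a := by
  induction w with
  | nil => exact absurd hx (hy ▸ hvA)
  | @cons x u y h p ih =>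
    rcases hclosed x hx u h with h' | h'
    · subst hy
      exact ⟨x, hx, (h' ▸ h).symm⟩
    · exact ih h' hy

lemma side_bound [Fintype V] {G : SimpleGraph V} {A Bs : Set V} {v aa : V}
    (hvA : v ∉ A) (hvB : v ∉ Bs)
    (hAB : ∀ a ∈ A, ∀ b ∈ Bs, ¬ G.Adj a b)
    (hdisj : Disjoint A Bs)
    (haA : aa ∈ A)
    (hsG1 : tv G Set.univ ≤ 1 + tv G A + tv G Bs)
    (hlt : tv (G.deleteEdges {s(v,aa)}) Set.univ < tv G Set.univ) :
    ∃ c, tv G A ≤ c ∧ c + tv G (Bs ∪ {v}) < tv G Set.univ := by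
  classical
  set H := G.deleteEdges {s(v,aa)} with hHdef
  obtain ⟨Y, -, hYc, hY3⟩ := tv_spec H Set.univ
  have htvA : tv H A = tv G A := tv_deleteEdges_eq G (Or.inl hvA)
  by_cases hvY : v ∈ Y
  · exfalso
    set fA := Y.filter (· ∈ A) with hfA
    set fB := Y.filter (· ∈ Bs) with hfB
    have h1 : tv G A ≤ fA.card := by
      rw [← htvA]
      refine tv_le (fun u hu => by simp [hfA] at hu; exact hu.2) ?_
      intro hk
      refine hY3 (k4in_mono ?_ hk)
      intro u hu
      refine ⟨trivial, fun huY => hu.2 ?_⟩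
      simp [hfA]
      exact ⟨huY, hu.1⟩
    have htvB : tv H Bs = tv G Bs := tv_deleteEdges_eq G (Or.inl hvB)
    have h2 : tv G Bs ≤ fB.card := by
      rw [← htvB]
      refine tv_le (fun u hu => by simp [hfB] at hu; exact hu.2) ?_
      intro hk
      refine hY3 (k4in_mono ?_ hk)
      intro u hu
      refine ⟨trivial, fun huY => hu.2 ?_⟩
      simp [hfB]
      exact ⟨huY, hu.1⟩
    have hdisjf : Disjoint fA fB := by
      rw [Finset.disjoint_left]
      intro u huA huB
      simp [hfA] at huA; simp [hfB] at huB
      exact Set.disjoint_left.mp hdisj huA.2 huB.2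
    have hvf : v ∉ fA ∪ fB := by
      simp [hfA, hfB]
      exact ⟨fun _ => hvA, fun _ => hvB⟩
    have hsub : insert v (fA ∪ fB) ⊆ Y := by
      intro u hu
      rcases Finset.mem_insert.mp hu with rfl | hu
      · exact hvY
      · rcases Finset.mem_union.mp hu with hu | hu
        · exact Finset.mem_of_mem_filter u hu
        · exact Finset.mem_of_mem_filter u hu
    have hcard : 1 + fA.card + fB.card ≤ Y.card := by
      have := Finset.card_le_card hsub
      rw [Finset.card_insert_of_notMem hvf, Finset.card_union_of_disjoint hdisjf] at this
      omega
    omega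
  · refine ⟨tv H (A ∪ {v}), ?_, ?_⟩
    · rw [← htvA]; exact tv_mono H Set.subset_union_left
    · set fA := Y.filter (· ∈ A ∪ {v}) with hfA
      set fB := Y.filter (· ∈ Bs ∪ {v}) with hfB
      have h1 : tv H (A ∪ {v}) ≤ fA.card := by
        refine tv_le (fun u hu => (Finset.mem_filter.mp (Finset.mem_coe.mp hu)).2) ?_
        intro hk
        refine hY3 (k4in_mono ?_ hk)
        intro u hu
        refine ⟨trivial, fun huY => hu.2 ?_⟩
        exact Finset.mem_coe.mpr (Finset.mem_filter.mpr ⟨huY, hu.1⟩)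
      have haaB : aa ∉ Bs ∪ {v} := by
        intro h
        rcases (Set.mem_union _ _ _).mp h with h | h
        · exact Set.disjoint_left.mp hdisj haA h
        · exact hvA ((Set.mem_singleton_iff.mp h) ▸ haA)
      have htvB2 : tv H (Bs ∪ {v}) = tv G (Bs ∪ {v}) := tv_deleteEdges_eq G (Or.inr haaB)
      have h2 : tv G (Bs ∪ {v}) ≤ fB.card := by
        rw [← htvB2]
        refine tv_le (fun u hu => (Finset.mem_filter.mp (Finset.mem_coe.mp hu)).2) ?_
        intro hk
        refine hY3 (k4in_mono ?_ hk)
        intro u hu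
        refine ⟨trivial, fun huY => hu.2 ?_⟩
        exact Finset.mem_coe.mpr (Finset.mem_filter.mpr ⟨huY, hu.1⟩)
      have hdisjf : Disjoint fA fB := by
        rw [Finset.disjoint_left]
        intro u huA huB
        obtain ⟨huY, huA2⟩ := Finset.mem_filter.mp huA
        obtain ⟨-, huB2⟩ := Finset.mem_filter.mp huB
        rcases (Set.mem_union _ _ _).mp huA2 with h | h
        · rcases (Set.mem_union _ _ _).mp huB2 with h' | h'
          · exact Set.disjoint_left.mp hdisj h h'
          · exact hvY ((Set.mem_singleton_iff.mp h') ▸ huY)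
        · exact hvY ((Set.mem_singleton_iff.mp h) ▸ huY)
      have hsub : fA ∪ fB ⊆ Y := by
        intro u hu
        rcases Finset.mem_union.mp hu with hu | hu
        · exact Finset.mem_of_mem_filter u hu
        · exact Finset.mem_of_mem_filter u hu
      have hcard : fA.card + fB.card ≤ Y.card := by
        have := Finset.card_le_card hsub
        rw [Finset.card_union_of_disjoint hdisjf] at this
        omega
      omega

lemma sG_le_one [Fintype V] {G : SimpleGraph V} {A Bs : Set V} {v : V}
    (hvA : v ∉ A) (hvB : v ∉ Bs)
    (hAB : ∀ a ∈ A, ∀ b ∈ Bs, ¬ G.Adj a b)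
    (hcover : ∀ u : V, u = v ∨ u ∈ A ∨ u ∈ Bs) :
    tv G Set.univ ≤ 1 + tv G A + tv G Bs := by
  classical
  obtain ⟨YA, hYA1, hYA2, hYA3⟩ := tv_spec G A
  obtain ⟨YB, hYB1, hYB2, hYB3⟩ := tv_spec G Bs
  set X := insert v (YA ∪ YB) with hX
  have hXk : ¬ K4In G (Set.univ \ ↑X) := by
    intro hk
    rcases k4in_split hvA hvB hAB hcover hk with h | h
    · refine hYA3 (k4in_mono ?_ h)
      rintro u ⟨⟨-, huX⟩, huAv⟩
      have huv : u ≠ v := fun hc => huX (by rw [hc]; exact Finset.mem_coe.mpr (Finset.mem_insert_self v _))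
      have huA : u ∈ A := by
        rcases (Set.mem_union _ _ _).mp huAv with h' | h'
        · exact h'
        · exact absurd (Set.mem_singleton_iff.mp h') huv
      refine ⟨huA, fun huYA => huX ?_⟩
      exact Finset.mem_coe.mpr (Finset.mem_insert_of_mem (Finset.mem_union_left _ huYA))
    · refine hYB3 (k4in_mono ?_ h)
      rintro u ⟨⟨-, huX⟩, huBv⟩
      have huv : u ≠ v := fun hc => huX (by rw [hc]; exact Finset.mem_coe.mpr (Finset.mem_insert_self v _))
      have huB : u ∈ Bs := by
        rcases (Set.mem_union _ _ _).mp huBv with h' | h'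
        · exact h'
        · exact absurd (Set.mem_singleton_iff.mp h') huv
      refine ⟨huB, fun huYB => huX ?_⟩
      exact Finset.mem_coe.mpr (Finset.mem_insert_of_mem (Finset.mem_union_right _ huYB))
  have h1 : tv G Set.univ ≤ X.card := tv_le (Set.subset_univ _) hXk
  have h2 : X.card ≤ 1 + YA.card + YB.card := by
    calc X.card ≤ (YA ∪ YB).card + 1 := Finset.card_insert_le _ _
      _ ≤ YA.card + YB.card + 1 := by
          have := Finset.card_union_le YA YB
          omega
      _ = 1 + YA.card + YB.card := by omega
  omega

lemma sG_le_two [Fintype V] {G : SimpleGraph V} {A Bs : Set V} {v : V}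
    (hvA : v ∉ A) (hvB : v ∉ Bs)
    (hAB : ∀ a ∈ A, ∀ b ∈ Bs, ¬ G.Adj a b)
    (hcover : ∀ u : V, u = v ∨ u ∈ A ∨ u ∈ Bs) :
    tv G Set.univ ≤ tv G (A ∪ {v}) + tv G (Bs ∪ {v}) := by
  classical
  obtain ⟨YA, hYA1, hYA2, hYA3⟩ := tv_spec G (A ∪ {v})
  obtain ⟨YB, hYB1, hYB2, hYB3⟩ := tv_spec G (Bs ∪ {v})
  set X := YA ∪ YB with hX
  have hXk : ¬ K4In G (Set.univ \ ↑X) := by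
    intro hk
    rcases k4in_split hvA hvB hAB hcover hk with h | h
    · refine hYA3 (k4in_mono ?_ h)
      rintro u ⟨⟨-, huX⟩, huAv⟩
      exact ⟨huAv, fun huYA => huX (Finset.mem_coe.mpr (Finset.mem_union_left _ huYA))⟩
    · refine hYB3 (k4in_mono ?_ h)
      rintro u ⟨⟨-, huX⟩, huBv⟩
      exact ⟨huBv, fun huYB => huX (Finset.mem_coe.mpr (Finset.mem_union_right _ huYB))⟩
  have h1 : tv G Set.univ ≤ X.card := tv_le (Set.subset_univ _) hXk
  have h2 : X.card ≤ YA.card + YB.card := Finset.card_union_le YA YB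
  omega


/-- A connected critical graph with at least 2 vertices is 2-connected, i.e. it has at
least 3 vertices and remains connected after deleting any single vertex. -/
theorem statement10 {V : Type*} [Fintype V] (G : SimpleGraph V)
    (hconn : G.Connected) (hcard : 2 ≤ Fintype.card V)
    (hcrit : ∀ e ∈ G.edgeSet, transNum (G.deleteEdges {e}) < transNum G) :
    3 ≤ Fintype.card V ∧ ∀ v : V, (G.induce {u : V | u ≠ v}).Connected := by
  classical
  -- G has an edge
  obtain ⟨x0, y0, hxy0⟩ := Fintype.exists_pair_of_one_lt_card (α := V) (by omega)
  have hedge : ∃ e, e ∈ G.edgeSet := by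
    obtain ⟨w⟩ := hconn.preconnected x0 y0
    cases w with
    | nil => exact absurd rfl hxy0
    | cons h p => exact ⟨_, (mem_edgeSet G).mpr h⟩
  obtain ⟨e0, he0⟩ := hedge
  -- at least 4 vertices
  have hcard4 : 4 ≤ Fintype.card V := by
    by_contra hlt
    have h0 : transNum G = 0 := by
      have hmem : (0:ℕ) ∈ {n : ℕ | ∃ X : Finset V, X.card = n ∧ IsTransversal G X} := by
        refine ⟨∅, Finset.card_empty, fun hk => ?_⟩
        exact hlt (k4in_card ((hasK4_induce_iff G _).mp hk))
      exact Nat.le_zero.mp (Nat.sInf_le hmem)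
    have := hcrit e0 he0
    omega
  refine ⟨by omega, fun v => ?_⟩
  by_contra hncon
  have hntr : Nontrivial V := Fintype.one_lt_card_iff_nontrivial.mp (by omega)
  obtain ⟨u0, hu0⟩ := exists_ne v
  set W : Set V := {u : V | u ≠ v} with hW
  have hpre : ¬ (G.induce W).Preconnected := fun hp => hncon ((connected_iff _).mpr ⟨hp, ⟨⟨u0, hu0⟩⟩⟩)
  rw [Preconnected] at hpre
  push_neg at hpre
  obtain ⟨x, y, hxy⟩ := hpre
  set A : Set V := {u : V | ∃ h : u ∈ W, (G.induce W).Reachable x ⟨u, h⟩} with hA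
  set Bs : Set V := {u : V | u ∈ W ∧ u ∉ A} with hBs
  have hvA : v ∉ A := fun ⟨h, _⟩ => h rfl
  have hvB : v ∉ Bs := fun ⟨h, _⟩ => h rfl
  have hAB : ∀ a ∈ A, ∀ b ∈ Bs, ¬ G.Adj a b := by
    rintro a ⟨ha, hra⟩ b ⟨hb, hnb⟩ hadj
    exact hnb ⟨hb, hra.trans (Adj.reachable (show (G.induce W).Adj ⟨a, ha⟩ ⟨b, hb⟩ from hadj))⟩
  have hcover : ∀ u : V, u = v ∨ u ∈ A ∨ u ∈ Bs := by
    intro u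
    by_cases huv : u = v
    · exact Or.inl huv
    · by_cases huA : u ∈ A
      · exact Or.inr (Or.inl huA)
      · exact Or.inr (Or.inr ⟨huv, huA⟩)
  have hdisj : Disjoint A Bs := Set.disjoint_left.mpr fun u hu hB => hB.2 hu
  have hxA : (x : V) ∈ A := ⟨x.2, Reachable.refl x⟩
  have hyB : (y : V) ∈ Bs := ⟨y.2, fun ⟨h, hr⟩ => hxy hr⟩
  -- closedness
  have hclA : ∀ c ∈ A, ∀ u, G.Adj c u → u = v ∨ u ∈ A := by
    rintro c ⟨hc, hrc⟩ u hadj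
    by_cases huv : u = v
    · exact Or.inl huv
    · exact Or.inr ⟨huv, hrc.trans (Adj.reachable
        (show (G.induce W).Adj ⟨c, hc⟩ ⟨u, huv⟩ from hadj))⟩
  have hclB : ∀ c ∈ Bs, ∀ u, G.Adj c u → u = v ∨ u ∈ Bs := by
    rintro c hcB u hadj
    by_cases huv : u = v
    · exact Or.inl huv
    · refine Or.inr ⟨huv, fun huA => ?_⟩
      exact hAB u huA c hcB hadj.symm
  -- neighbors of v on both sides
  obtain ⟨wx⟩ := hconn.preconnected (x : V) v
  obtain ⟨a, haA, hva⟩ := exists_nbr hvA hclA wx hxA rfl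
  obtain ⟨wy⟩ := hconn.preconnected (y : V) v
  obtain ⟨b, hbB, hvb⟩ := exists_nbr hvB hclB wy hyB rfl
  -- swapped hypotheses
  have hBA : ∀ b' ∈ Bs, ∀ a' ∈ A, ¬ G.Adj b' a' := fun b' hb a' ha h => hAB a' ha b' hb h.symm
  have hcover' : ∀ u : V, u = v ∨ u ∈ Bs ∨ u ∈ A := by
    intro u; rcases hcover u with h | h | h
    · exact Or.inl h
    · exact Or.inr (Or.inr h)
    · exact Or.inr (Or.inl h)
  -- quantities
  have hsG1 : tv G Set.univ ≤ 1 + tv G A + tv G Bs := sG_le_one hvA hvB hAB hcover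
  have hsG1' : tv G Set.univ ≤ 1 + tv G Bs + tv G A := by omega
  have hsG2 : tv G Set.univ ≤ tv G (A ∪ {v}) + tv G (Bs ∪ {v}) := sG_le_two hvA hvB hAB hcover
  have hlta : tv (G.deleteEdges {s(v,a)}) Set.univ < tv G Set.univ := by
    have := hcrit s(v,a) ((mem_edgeSet G).mpr hva)
    rwa [transNum_eq_tv, transNum_eq_tv] at this
  have hltb : tv (G.deleteEdges {s(v,b)}) Set.univ < tv G Set.univ := by
    have := hcrit s(v,b) ((mem_edgeSet G).mpr hvb)
    rwa [transNum_eq_tv, transNum_eq_tv] at this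
  obtain ⟨cA, hcA1, hcA2⟩ := side_bound hvA hvB hAB hdisj haA hsG1 hlta
  obtain ⟨cB, hcB1, hcB2⟩ := side_bound hvB hvA hBA hdisj.symm hbB hsG1' hltb
  have hA1 : tv G A ≤ tv G (A ∪ {v}) := tv_mono G Set.subset_union_left
  have hB1 : tv G Bs ≤ tv G (Bs ∪ {v}) := tv_mono G Set.subset_union_left
  omega
end

section
/- Let G be a finite simple graph with minimum degree at least 3 that contains no subgraph isomorphic to K₄. Then every shortest even cycle C of G is almost induced: either C has no chord in G, or C has exactly one chord e and the two cycles into which e splits C are both odd. -/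
open SimpleGraph

/-- A cycle of length `n` in `G`, given as an injective map `ZMod n → V` whose
cyclically consecutive images are adjacent (with `n ≥ 3`). -/
def IsGraphCycle {V : Type*} (G : SimpleGraph V) {n : ℕ} (f : ZMod n → V) : Prop :=
  3 ≤ n ∧ Function.Injective f ∧ ∀ i : ZMod n, G.Adj (f i) (f (i + 1))

/-- The chords of the cycle `f`: edges of `G` joining two vertices of the cycle that are
not consecutive on it, recorded as unordered pairs of positions. -/
def cycleChords {V : Type*} (G : SimpleGraph V) {n : ℕ} (f : ZMod n → V) :
    Set (Sym2 (ZMod n)) :=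
  {e | ∃ i j : ZMod n, e = s(i, j) ∧ G.Adj (f i) (f j) ∧ j ≠ i + 1 ∧ i ≠ j + 1}

/-- The cycle `f` is almost induced: either it has no chord, or it has exactly one chord
and that chord splits the cycle into two odd cycles (i.e. the two arcs between the
endpoints of the chord both have an even number of edges). -/
def AlmostInduced {V : Type*} (G : SimpleGraph V) {n : ℕ} (f : ZMod n → V) : Prop :=
  cycleChords G f = ∅ ∨
    ∃ i j : ZMod n, cycleChords G f = {s(i, j)} ∧
      ∃ d : ℕ, Even d ∧ Even (n - d) ∧ d < n ∧ j = i + (d : ZMod n)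

lemma cycle_of_offsets {V : Type*} {G : SimpleGraph V} {n : ℕ} {f : ZMod n → V}
    (hcyc : IsGraphCycle G f) {m : ℕ} (hm : 3 ≤ m) (u : ZMod n) (o : ℕ → ℕ)
    (holt : ∀ k, k < m → o k < n)
    (hoinj : ∀ a b, a < m → b < m → o a = o b → a = b)
    (hadj : ∀ k, k + 1 < m → G.Adj (f (u + (o k : ZMod n))) (f (u + (o (k+1) : ZMod n))))
    (hwrap : G.Adj (f (u + (o (m-1) : ZMod n))) (f (u + (o 0 : ZMod n)))) :
    IsGraphCycle G (fun i : ZMod m => f (u + (o i.val : ZMod n))) := by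
  have hn3 : 3 ≤ n := hcyc.1
  haveI : NeZero m := ⟨by omega⟩
  haveI : NeZero n := ⟨by omega⟩
  refine ⟨hm, ?_, ?_⟩
  · intro a b h
    simp only at h
    have h2 := hcyc.2.1 h
    have h3 : (o a.val : ZMod n) = (o b.val : ZMod n) := by
      exact add_left_cancel h2
    have h4 : o a.val = o b.val := by
      have := congrArg ZMod.val h3
      rwa [ZMod.val_cast_of_lt (holt _ (ZMod.val_lt a)),
        ZMod.val_cast_of_lt (holt _ (ZMod.val_lt b))] at this
    exact ZMod.val_injective m (hoinj _ _ (ZMod.val_lt a) (ZMod.val_lt b) h4)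
  · intro i
    simp only
    have hv1 : (1 : ZMod m).val = 1 := ZMod.val_one_eq_one_mod m ▸ Nat.mod_eq_of_lt (by omega)
    have hv : (i + 1).val = (i.val + 1) % m := by rw [ZMod.val_add, hv1]
    have hil : i.val < m := ZMod.val_lt i
    by_cases h : i.val + 1 < m
    · rw [hv, Nat.mod_eq_of_lt h]
      exact hadj i.val h
    · have h1 : i.val = m - 1 := by omega
      have h2 : (i + 1).val = 0 := by rw [hv]; rw [show i.val + 1 = m by omega]; exact Nat.mod_self m
      rw [h1, h2]
      exact hwrap

lemma twoArc_false {V : Type*} {G : SimpleGraph V} {n : ℕ} {f : ZMod n → V}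
    (hcyc : IsGraphCycle G f)
    (hshortest : ∀ (m : ℕ) (g : ZMod m → V), IsGraphCycle G g → Even m → n ≤ m)
    (u : ZMod n) (a1 b c : ℕ) (hab : a1 < b) (hbc : b + c < n)
    (h1 : G.Adj (f (u + (a1 : ZMod n))) (f (u + (b : ZMod n))))
    (h2 : G.Adj (f (u + ((b + c : ℕ) : ZMod n))) (f u))
    (hm3 : 3 ≤ a1 + c + 2) (hme : Even (a1 + c + 2)) (hlt : a1 + c + 2 < n) : False := by
  set m := a1 + c + 2 with hmdef
  set o : ℕ → ℕ := fun k => if k ≤ a1 then k else b + (k - a1 - 1) with hodef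
  have hcyc2 : IsGraphCycle G (fun i : ZMod m => f (u + (o i.val : ZMod n))) := by
    refine cycle_of_offsets hcyc hm3 u o ?_ ?_ ?_ ?_
    · intro k hk; simp only [hodef]; split_ifs <;> omega
    · intro s t hs ht h; simp only [hodef] at h; split_ifs at h <;> omega
    · intro k hk
      rcases lt_trichotomy k a1 with h' | h' | h'
      · rw [show o k = k from if_pos (by omega), show o (k+1) = k + 1 from if_pos (by omega)]
        simpa [Nat.cast_add, add_assoc] using hcyc.2.2 (u + (k : ZMod n))
      · rw [show o k = a1 from by simp [hodef, h'],
          show o (k+1) = b from by simp only [hodef]; rw [if_neg (by omega)]; omega]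
        exact h1
      · rw [show o k = b + (k - a1 - 1) from if_neg (by omega),
          show o (k+1) = (b + (k - a1 - 1)) + 1 from by rw [hodef]; simp only; rw [if_neg (by omega)]; omega]
        simpa [Nat.cast_add, add_assoc] using hcyc.2.2 (u + ((b + (k - a1 - 1) : ℕ) : ZMod n))
    · rw [show o (m-1) = b + c from by simp only [hodef]; rw [if_neg (by omega)]; omega,
        show o 0 = 0 from if_pos (by omega)]
      simpa using h2
  exact absurd (hshortest m _ hcyc2 hme) (by omega)

lemma twoArcRev_false {V : Type*} {G : SimpleGraph V} {n : ℕ} {f : ZMod n → V}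
    (hcyc : IsGraphCycle G f)
    (hshortest : ∀ (m : ℕ) (g : ZMod m → V), IsGraphCycle G g → Even m → n ≤ m)
    (u : ZMod n) (a1 b c : ℕ) (hab : a1 < b) (hbc : b + c < n)
    (h1 : G.Adj (f (u + (a1 : ZMod n))) (f (u + ((b + c : ℕ) : ZMod n))))
    (h2 : G.Adj (f (u + (b : ZMod n))) (f u))
    (hm3 : 3 ≤ a1 + c + 2) (hme : Even (a1 + c + 2)) (hlt : a1 + c + 2 < n) : False := by
  set m := a1 + c + 2 with hmdef
  set o : ℕ → ℕ := fun k => if k ≤ a1 then k else b + c - (k - a1 - 1) with hodef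
  have hcyc2 : IsGraphCycle G (fun i : ZMod m => f (u + (o i.val : ZMod n))) := by
    refine cycle_of_offsets hcyc hm3 u o ?_ ?_ ?_ ?_
    · intro k hk; simp only [hodef]; split_ifs <;> omega
    · intro s t hs ht h; simp only [hodef] at h; split_ifs at h <;> omega
    · intro k hk
      rcases lt_trichotomy k a1 with h' | h' | h'
      · rw [show o k = k from if_pos (by omega), show o (k+1) = k + 1 from if_pos (by omega)]
        simpa [Nat.cast_add, add_assoc] using hcyc.2.2 (u + (k : ZMod n))
      · rw [show o k = a1 from by simp [hodef, h'],
          show o (k+1) = b + c from by simp only [hodef]; rw [if_neg (by omega)]; omega]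
        exact h1
      · have hk2 : k - a1 - 1 < c := by omega
        have hstep : o k = (o (k+1)) + 1 := by
          simp only [hodef]; rw [if_neg (by omega), if_neg (by omega)]; omega
        rw [hstep]
        simpa [Nat.cast_add, add_assoc] using (hcyc.2.2 (u + ((o (k+1) : ℕ) : ZMod n))).symm
    · rw [show o (m-1) = b from by simp only [hodef]; rw [if_neg (by omega)]; omega,
        show o 0 = 0 from if_pos (by omega)]
      simpa using h2
  exact absurd (hshortest m _ hcyc2 hme) (by omega)

lemma chord_gap {V : Type*} {G : SimpleGraph V} {n : ℕ} {f : ZMod n → V}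
    (hcyc : IsGraphCycle G f) (heven : Even n)
    (hshortest : ∀ (m : ℕ) (g : ZMod m → V), IsGraphCycle G g → Even m → n ≤ m)
    (p q : ZMod n) (hadj : G.Adj (f p) (f q)) (hq : q ≠ p + 1) (hp : p ≠ q + 1) :
    2 ≤ (q - p).val ∧ (q - p).val ≤ n - 2 ∧ Even (q - p).val := by
  have hn3 : 3 ≤ n := hcyc.1
  haveI : NeZero n := ⟨by omega⟩
  set t := (q - p).val with htdef
  have htlt : t < n := ZMod.val_lt _
  have hcast : ((t : ℕ) : ZMod n) = q - p := ZMod.natCast_rightInverse _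
  have ht0 : t ≠ 0 := by
    intro h
    have : q - p = 0 := by rw [← hcast, h]; simp
    have h5 : q = p := by linear_combination this
    exact hadj.ne (congrArg f h5).symm
  have ht1 : t ≠ 1 := by
    intro h
    apply hq
    have h5 : q - p = 1 := by rw [← hcast, h]; simp
    linear_combination h5
  have htn1 : t ≠ n - 1 := by
    intro h
    apply hp
    have h2 : q - p = ((n - 1 : ℕ) : ZMod n) := by rw [← hcast, h]
    have h3 : ((n - 1 : ℕ) : ZMod n) = -1 := by
      have : ((n - 1 : ℕ) : ZMod n) + 1 = ((n : ℕ) : ZMod n) := by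
        rw [← Nat.cast_succ]; congr 1; omega
      rw [ZMod.natCast_self] at this
      linear_combination this
    rw [h3] at h2
    linear_combination -h2
  refine ⟨by omega, by omega, ?_⟩
  by_contra hodd
  rw [Nat.not_even_iff_odd] at hodd
  obtain ⟨k, hk⟩ := hodd
  have ht3 : 3 ≤ t := by omega
  have hcyc2 := cycle_of_offsets hcyc (m := t + 1) (by omega) p (fun k => k)
    (fun k hk => show k < n by omega) (fun a b _ _ h => h)
    (fun k hk => by simpa [Nat.cast_add, add_assoc] using hcyc.2.2 (p + (k : ZMod n)))
    (by
      simp only [Nat.add_sub_cancel, Nat.cast_zero, add_zero]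
      rw [hcast]
      simpa using hadj.symm)
  have hle := hshortest (t + 1) _ hcyc2 ⟨k + 1, by omega⟩
  omega

lemma aux_main {V : Type*} {G : SimpleGraph V} {n : ℕ} {f : ZMod n → V}
    (hcyc : IsGraphCycle G f) (heven : Even n)
    (hK4free : ¬ ∃ g : Fin 4 → V, Function.Injective g ∧
      ∀ i j, i ≠ j → G.Adj (g i) (g j))
    (hshortest : ∀ (m : ℕ) (g : ZMod m → V), IsGraphCycle G g → Even m → n ≤ m)
    (i : ZMod n) (a x y : ℕ)
    (ha2 : 2 ≤ a) (han : a ≤ n - 2) (haeven : Even a)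
    (h1 : G.Adj (f i) (f (i + (a : ZMod n))))
    (hxn : x < n) (hyn : y < n) (hxy : x ≤ y)
    (hg2 : 2 ≤ y - x) (hgn : y - x ≤ n - 2) (hgeven : Even (y - x))
    (h2 : G.Adj (f (i + (x : ZMod n))) (f (i + (y : ZMod n)))) :
    x = 0 ∧ y = a := by
  have hn3 : 3 ≤ n := hcyc.1
  rw [Nat.even_iff] at haeven hgeven heven
  have hc : ∀ (u : ZMod n) (s t : ℕ), s ≤ t →
      (u + (s : ZMod n)) + ((t - s : ℕ) : ZMod n) = u + (t : ZMod n) := by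
    intro u s t hst; rw [Nat.cast_sub hst]; ring
  have hw : ∀ (u : ZMod n) (s : ℕ), s ≤ n →
      (u + (s : ZMod n)) + ((n - s : ℕ) : ZMod n) = u := by
    intro u s hs; rw [Nat.cast_sub hs, ZMod.natCast_self]; ring
  by_cases hya : y ≤ a
  · by_cases hdeg : x = 0 ∧ y = a
    · exact hdeg
    · exfalso
      rw [not_and_or] at hdeg
      refine twoArc_false hcyc hshortest i x y (a - y) (by omega) (by omega)
        h2 ?_ (by omega) (by rw [Nat.even_iff]; omega) (by omega)
      rw [show y + (a - y) = a from by omega]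
      exact h1.symm
  · by_cases hxa : a ≤ x
    · exfalso
      refine twoArc_false hcyc hshortest (i + (a : ZMod n)) (x - a) (y - a) (n - y)
        (by omega) (by omega) ?_ ?_ (by omega) (by rw [Nat.even_iff]; omega) (by omega)
      · rw [hc i a x hxa, hc i a y (by omega)]
        exact h2
      · rw [show (y - a) + (n - y) = n - a from by omega, hw i a (by omega)]
        exact h1
    · by_cases hx0 : x = 0
      · exfalso
        subst hx0
        refine twoArc_false hcyc hshortest (i + (a : ZMod n)) (y - a) (n - a) 0
          (by omega) (by omega) ?_ ?_ (by omega) (by rw [Nat.even_iff]; omega) (by omega)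
        · rw [hc i a y (by omega), hw i a (by omega)]
          simpa using h2.symm
        · rw [show (n - a) + 0 = n - a from by omega, hw i a (by omega)]
          exact h1
      · exfalso
        have hsum : (x + (y - a) + 2) + ((a - x) + (n - y) + 2) = n + 4 := by omega
        by_cases hn4 : n = 4
        · -- K4 case
          subst hn4
          have hA : a = 2 := by omega
          have hX : x = 1 := by omega
          have hY : y = 3 := by omega
          subst hA; subst hX; subst hY
          apply hK4free
          refine ⟨fun k => f (i + ((k.val : ℕ) : ZMod 4)), ?_, ?_⟩
          · intro s t h
            simp only at h
            have h2 := hcyc.2.1 h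
            have h3 : ((s.val : ℕ) : ZMod 4) = ((t.val : ℕ) : ZMod 4) := add_left_cancel h2
            have h4 := congrArg ZMod.val h3
            rw [ZMod.val_cast_of_lt s.isLt, ZMod.val_cast_of_lt t.isLt] at h4
            exact Fin.ext h4
          · have step : ∀ s : ℕ, G.Adj (f (i + (s : ZMod 4))) (f (i + ((s + 1 : ℕ) : ZMod 4))) := by
              intro s
              simpa [Nat.cast_add, add_assoc] using hcyc.2.2 (i + (s : ZMod 4))
            have a01 := step 0
            have a12 := step 1
            have a23 := step 2
            have a30 := step 3
            rw [show ((3 + 1 : ℕ) : ZMod 4) = ((0 : ℕ) : ZMod 4) from by decide] at a30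
            have a02 : G.Adj (f (i + ((0 : ℕ) : ZMod 4))) (f (i + ((2 : ℕ) : ZMod 4))) := by
              simpa using h1
            have a13 : G.Adj (f (i + ((1 : ℕ) : ZMod 4))) (f (i + ((3 : ℕ) : ZMod 4))) := h2
            intro s t hst
            fin_cases s <;> fin_cases t <;>
              first
                | exact absurd rfl hst
                | exact a01 | exact a01.symm | exact a12 | exact a12.symm
                | exact a23 | exact a23.symm | exact a30 | exact a30.symm
                | exact a02 | exact a02.symm | exact a13 | exact a13.symm
        · have hcase : x + (y - a) + 2 < n ∨ (a - x) + (n - y) + 2 < n := by omega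
          rcases hcase with hlt | hlt
          · refine twoArcRev_false hcyc hshortest i x a (y - a) (by omega) (by omega)
              ?_ h1.symm (by omega) (by rw [Nat.even_iff]; omega) hlt
            rw [show a + (y - a) = y from by omega]
            exact h2
          · refine twoArcRev_false hcyc hshortest (i + (x : ZMod n)) (a - x) (y - x) (n - y)
              (by omega) (by omega) ?_ ?_ (by omega) (by rw [Nat.even_iff]; omega) hlt
            · rw [hc i x a (by omega), show (y - x) + (n - y) = n - x from by omega,
                hw i x (by omega)]
              exact h1.symm
            · rw [hc i x y hxy]
              exact h2.symm

lemma chords_unique {V : Type*} {G : SimpleGraph V} {n : ℕ} {f : ZMod n → V}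
    (hcyc : IsGraphCycle G f) (heven : Even n)
    (hK4free : ¬ ∃ g : Fin 4 → V, Function.Injective g ∧
      ∀ i j, i ≠ j → G.Adj (g i) (g j))
    (hshortest : ∀ (m : ℕ) (g : ZMod m → V), IsGraphCycle G g → Even m → n ≤ m)
    (i j : ZMod n) (hadj : G.Adj (f i) (f j)) (hne1 : j ≠ i + 1) (hne2 : i ≠ j + 1)
    (e : Sym2 (ZMod n)) (he : e ∈ cycleChords G f) : e = s(i, j) := by
  have hn3 : 3 ≤ n := hcyc.1
  haveI : NeZero n := ⟨by omega⟩
  obtain ⟨p, q, rfl, hadj2, hq1, hq2⟩ := he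
  obtain ⟨ha2, han, haeven⟩ := chord_gap hcyc heven hshortest i j hadj hne1 hne2
  set a := (j - i).val with hadef
  have hji : j = i + (a : ZMod n) := by rw [ZMod.natCast_rightInverse]; ring
  have h1 : G.Adj (f i) (f (i + (a : ZMod n))) := hji ▸ hadj
  set x0 := (p - i).val with hx0def
  set y0 := (q - i).val with hy0def
  have hpi : p = i + (x0 : ZMod n) := by rw [ZMod.natCast_rightInverse]; ring
  have hqi : q = i + (y0 : ZMod n) := by rw [ZMod.natCast_rightInverse]; ring
  have hx0n : x0 < n := ZMod.val_lt _
  have hy0n : y0 < n := ZMod.val_lt _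
  rcases le_total x0 y0 with hxy | hxy
  · have hgap : (q - p).val = y0 - x0 := by
      rw [show q - p = ((y0 - x0 : ℕ) : ZMod n) from by
        rw [Nat.cast_sub hxy, hpi, hqi]; ring]
      exact ZMod.val_cast_of_lt (by omega)
    obtain ⟨hg2, hgn, hgeven⟩ := chord_gap hcyc heven hshortest p q hadj2 hq1 hq2
    rw [hgap] at hg2 hgn hgeven
    obtain ⟨hx, hy⟩ := aux_main hcyc heven hK4free hshortest i a x0 y0 ha2 han haeven h1
      hx0n hy0n hxy hg2 hgn hgeven (by rw [← hpi, ← hqi]; exact hadj2)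
    have hp' : p = i := by rw [hpi, hx]; simp
    have hq' : q = j := by rw [hqi, hy, ← hji]
    rw [hp', hq']
  · have hgap : (p - q).val = x0 - y0 := by
      rw [show p - q = ((x0 - y0 : ℕ) : ZMod n) from by
        rw [Nat.cast_sub hxy, hpi, hqi]; ring]
      exact ZMod.val_cast_of_lt (by omega)
    obtain ⟨hg2, hgn, hgeven⟩ := chord_gap hcyc heven hshortest q p hadj2.symm hq2 hq1
    rw [hgap] at hg2 hgn hgeven
    obtain ⟨hy, hx⟩ := aux_main hcyc heven hK4free hshortest i a y0 x0 ha2 han haeven h1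
      hy0n hx0n hxy hg2 hgn hgeven (by rw [← hpi, ← hqi]; exact hadj2.symm)
    have hq' : q = i := by rw [hqi, hy]; simp
    have hp' : p = j := by rw [hpi, hx, ← hji]
    rw [hp', hq', Sym2.eq_swap]


theorem statement12_aux {V : Type*} (G : SimpleGraph V)
    (hK4free : ¬ ∃ g : Fin 4 → V, Function.Injective g ∧
      ∀ i j, i ≠ j → G.Adj (g i) (g j))
    (n : ℕ) (f : ZMod n → V) (hcyc : IsGraphCycle G f) (heven : Even n)
    (hshortest : ∀ (m : ℕ) (g : ZMod m → V), IsGraphCycle G g → Even m → n ≤ m) :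
    AlmostInduced G f := by
  have hn3 : 3 ≤ n := hcyc.1
  haveI : NeZero n := ⟨by omega⟩
  by_cases hemp : cycleChords G f = ∅
  · exact Or.inl hemp
  · right
    obtain ⟨e, he⟩ := Set.nonempty_iff_ne_empty.mpr hemp
    obtain ⟨i, j, rfl, hadj, hne1, hne2⟩ := he
    obtain ⟨hg2, hgn, hgeven⟩ := chord_gap hcyc heven hshortest i j hadj hne1 hne2
    refine ⟨i, j, ?_, (j - i).val, hgeven, ?_, ZMod.val_lt _, ?_⟩
    · ext e'
      simp only [Set.mem_singleton_iff]
      constructor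
      · intro he'
        exact chords_unique hcyc heven hK4free hshortest i j hadj hne1 hne2 e' he'
      · rintro rfl
        exact ⟨i, j, rfl, hadj, hne1, hne2⟩
    · rw [Nat.even_iff] at *
      omega
    · rw [ZMod.natCast_rightInverse]; ring

/-- In a graph with minimum degree at least 3 and no `K₄` subgraph, every shortest even
cycle is almost induced. -/
theorem statement12 {V : Type*} [Fintype V] (G : SimpleGraph V)
    (hmindeg : ∀ v : V, 3 ≤ (G.neighborSet v).ncard)
    (hK4free : ¬ ∃ g : Fin 4 → V, Function.Injective g ∧
      ∀ i j, i ≠ j → G.Adj (g i) (g j))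
    (n : ℕ) (f : ZMod n → V) (hcyc : IsGraphCycle G f) (heven : Even n)
    (hshortest : ∀ (m : ℕ) (g : ZMod m → V), IsGraphCycle G g → Even m → n ≤ m) :
    AlmostInduced G f := by
  exact statement12_aux G hK4free n f hcyc heven hshortest
end

section
/- Let G be a finite simple graph and let C be an almost induced even cycle of G. Then there exists a set S ⊆ V(C) with |S| = |C|/2 that is a stable set of G (i.e., no two vertices of S are adjacent in G). -/
open SimpleGraph

lemma zmod2_succ_ne (x : ZMod 2) : x + 1 ≠ x := by revert x; decide

lemma zmod2_ne_iff (x c : ZMod 2) : x ≠ c ↔ x = c + 1 := by revert x c; decide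

lemma fiber_card (n : ℕ) [NeZero n] (h2 : (2 : ℕ) ∣ n) (c : ZMod 2) :
    2 * (Finset.univ.filter (fun i : ZMod n => ZMod.castHom h2 (ZMod 2) i = c)).card = n := by
  set φ := ZMod.castHom h2 (ZMod 2)
  have hbij :
      (Finset.univ.filter (fun i : ZMod n => φ i = c)).card =
      (Finset.univ.filter (fun i : ZMod n => φ i = c + 1)).card := by
    apply Finset.card_bij (fun i _ => i + 1)
    · intro a ha
      simp only [Finset.mem_filter, Finset.mem_univ, true_and] at ha ⊢
      rw [map_add, map_one, ha]
    · intro a _ b _ hab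
      exact add_right_cancel hab
    · intro b hb
      refine ⟨b - 1, ?_, by ring⟩
      simp only [Finset.mem_filter, Finset.mem_univ, true_and] at hb ⊢
      have h : φ (b - 1) + 1 = φ b := by rw [map_sub, map_one]; ring
      rw [hb] at h
      exact add_right_cancel h
  have hsplit := Finset.card_filter_add_card_filter_not
      (s := (Finset.univ : Finset (ZMod n))) (p := fun i => φ i = c)
  have hne : (Finset.univ.filter (fun i : ZMod n => ¬ φ i = c)) =
      (Finset.univ.filter (fun i : ZMod n => φ i = c + 1)) := by
    apply Finset.filter_congr
    intro i _
    simpa using zmod2_ne_iff (φ i) c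
  rw [hne, ← hbij, Finset.card_univ, ZMod.card] at hsplit
  omega

/-- An almost induced even cycle contains a stable set of the graph of size half the
length of the cycle. -/
theorem statement17 {V : Type*} [Fintype V] (G : SimpleGraph V)
    (n : ℕ) (f : ZMod n → V) (hcyc : IsGraphCycle G f) (heven : Even n)
    (hai : AlmostInduced G f) :
    ∃ S : Finset V, (↑S : Set V) ⊆ Set.range f ∧ 2 * S.card = n ∧
      ∀ x ∈ S, ∀ y ∈ S, ¬ G.Adj x y := by
  classical
  obtain ⟨hn3, hinj, hadj⟩ := hcyc
  haveI : NeZero n := ⟨by omega⟩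
  have h2 : (2 : ℕ) ∣ n := heven.two_dvd
  set φ := ZMod.castHom h2 (ZMod 2) with hφ
  have hstep : ∀ i : ZMod n, φ (i + 1) ≠ φ i := by
    intro i h
    rw [map_add, map_one] at h
    exact zmod2_succ_ne (φ i) h
  obtain ⟨c, hc⟩ : ∃ c : ZMod 2, ∀ e ∈ cycleChords G f, ∀ i j : ZMod n,
      e = s(i, j) → φ i ≠ c := by
    rcases hai with h | ⟨a, b, hab, d, hd, _, _, hbd⟩
    · exact ⟨0, fun e he => by rw [h] at he; exact absurd he (Set.notMem_empty e)⟩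
    · refine ⟨φ a + 1, fun e he i j hij hi => ?_⟩
      rw [hab] at he
      have heq : s(i, j) = s(a, b) := by rw [← hij]; exact he
      have hφb : φ b = φ a := by
        rw [hbd, map_add]
        have h1 : φ ((d : ℕ) : ZMod n) = ((d : ℕ) : ZMod 2) := by simp [φ]
        have h0 : ((d : ℕ) : ZMod 2) = 0 :=
          (ZMod.natCast_eq_zero_iff d 2).mpr hd.two_dvd
        rw [h1, h0, add_zero]
      have hia : φ i = φ a := by
        rw [Sym2.eq_iff] at heq
        rcases heq with ⟨h1, _⟩ | ⟨h1, _⟩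
        · rw [h1]
        · rw [h1, hφb]
      rw [hia] at hi
      exact zmod2_succ_ne (φ a) hi.symm
  refine ⟨(Finset.univ.filter (fun i : ZMod n => φ i = c)).image f, ?_, ?_, ?_⟩
  · intro x hx
    simp only [Finset.coe_image, Set.mem_image] at hx
    obtain ⟨i, _, rfl⟩ := hx
    exact Set.mem_range_self i
  · rw [Finset.card_image_of_injective _ hinj]
    exact fiber_card n h2 c
  · intro x hx y hy hadjxy
    simp only [Finset.mem_image, Finset.mem_filter, Finset.mem_univ, true_and] at hx hy
    obtain ⟨i, hi, rfl⟩ := hx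
    obtain ⟨j, hj, rfl⟩ := hy
    by_cases h1 : j = i + 1
    · rw [h1] at hj; exact hstep i (hj.trans hi.symm)
    by_cases h2' : i = j + 1
    · rw [h2'] at hi; exact hstep j (hi.trans hj.symm)
    · have hm : s(i, j) ∈ cycleChords G f := ⟨i, j, rfl, hadjxy, h1, h2'⟩
      exact hc _ hm i j rfl hi
end
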